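/- arXiv:1811.04966 — 9 statements merged into one kernel-verified Lean document; each statement's English description precedes it below -/
import Mathlib

section
/- Let F be a hyperfield and c_0,…,c_n ∈ F. For a ∈ F, the following are equivalent: (1) 0 belongs to the hypersum ⊞_{i=0}^n c_i a^i; (2) there exist d_0,…,d_{n-1} ∈ F with c_0 = -a·d_0, c_i ∈ (-a·d_i) ⊞ d_{i-1} for i = 1,…,n-1, and c_n = d_{n-1}. -/
/-- A hyperfield: a set with a multivalued addition `hadd`, multiplication `mul`,
distinguished elements `zero` and `one`, satisfying the hypergroup axioms (HG1)-(HG3)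
and the hyperfield axioms (HF1)-(HF4). -/
structure Hyperfield (F : Type*) where
  hadd : F → F → Set F
  mul : F → F → F
  zero : F
  one : F
  /-- the hyperadditive inverse -/
  neg : F → F
  hadd_nonempty : ∀ a b, (hadd a b).Nonempty
  hadd_comm : ∀ a b, hadd a b = hadd b a
  hadd_assoc : ∀ a b c, (⋃ d ∈ hadd b c, hadd a d) = ⋃ d ∈ hadd a b, hadd d c
  zero_hadd : ∀ a, hadd zero a = {a}
  neg_mem : ∀ a, zero ∈ hadd a (neg a)
  neg_unique : ∀ a b, zero ∈ hadd a b → b = neg a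
  reversible : ∀ a b c, a ∈ hadd b c ↔ neg b ∈ hadd (neg a) c
  mul_comm : ∀ a b, mul a b = mul b a
  mul_assoc : ∀ a b c, mul (mul a b) c = mul a (mul b c)
  one_mul : ∀ a, mul one a = a
  exists_inv : ∀ a, a ≠ zero → ∃ b, mul a b = one
  zero_ne_one : zero ≠ one
  mul_zero : ∀ a, mul a zero = zero
  distrib : ∀ a b c, (fun x => mul a x) '' hadd b c = hadd (mul a b) (mul a c)

/-- The hypersum `⊞_{i=0}^{n} f i`, defined by the recursion
`⊞_{i=0}^{n+1} f i = ⋃_{b ∈ ⊞_{i=0}^{n} f i} b ⊞ f (n+1)`. -/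
def Hyperfield.hsum {F : Type*} (H : Hyperfield F) (f : ℕ → F) : ℕ → Set F
  | 0 => {f 0}
  | n + 1 => ⋃ b ∈ H.hsum f n, H.hadd b (f (n + 1))

/-- Powers in a hyperfield. -/
def Hyperfield.pow {F : Type*} (H : Hyperfield F) (a : F) : ℕ → F
  | 0 => H.one
  | n + 1 => H.mul (H.pow a n) a

/-- `HDivRel H a n c d` expresses `p ∈ (T - a) q`, where `p = Σ_{i=0}^n c_i T^i` and
`q = Σ_{i=0}^{n-1} d_i T^i`: namely `c_0 = (-a)·d_0`, `c_i ∈ (-a)·d_i ⊞ d_{i-1}` for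
`1 ≤ i ≤ n-1`, and `c_n = d_{n-1}`. -/
def HDivRel {F : Type*} (H : Hyperfield F) (a : F) (n : ℕ) (c d : ℕ → F) : Prop :=
  c 0 = H.mul (H.neg a) (d 0) ∧
  (∀ i, 1 ≤ i → i ≤ n - 1 → c i ∈ H.hadd (H.mul (H.neg a) (d i)) (d (i - 1))) ∧
  c n = d (n - 1)

/-! A witness of `0 ∈ ⊞_{i ≤ n} f i`, where `f i = c_i a^i`, is a chain of partial hypersums
`e_0 = f 0`, `e_i ∈ e_{i-1} ⊞ f i`, ending in `e_n = 0`. For `a ≠ 0` such chains correspond to the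
sequences `d` through `e_i = -(a^{i+1} d_i)`: by reversibility and after cancelling the unit `a^i`,
the step condition becomes `c_i ∈ (-a) d_i ⊞ d_{i-1}`, and `0 ∈ e_{n-1} ⊞ f n` becomes
`c_n = d_{n-1}`. For `a = 0` the hypersum is `{c_0}` and both sides say `c_0 = 0`. -/

namespace Hyperfield

variable {F : Type*} (H : Hyperfield F)

theorem neg_neg (x : F) : H.neg (H.neg x) = x :=
  (H.neg_unique (H.neg x) x (by rw [H.hadd_comm]; exact H.neg_mem x)).symm

theorem neg_zero : H.neg H.zero = H.zero :=
  (H.neg_unique H.zero H.zero (by rw [H.zero_hadd]; rfl)).symm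

theorem mul_one (x : F) : H.mul x H.one = x := by
  rw [H.mul_comm]; exact H.one_mul x

theorem zero_mul (x : F) : H.mul H.zero x = H.zero := by
  rw [H.mul_comm]; exact H.mul_zero x

theorem zero_mem_hadd_iff {x y : F} : H.zero ∈ H.hadd x y ↔ y = H.neg x :=
  ⟨H.neg_unique x y, fun h => h ▸ H.neg_mem x⟩

theorem mul_mem_hadd {u x y z : F} (h : x ∈ H.hadd y z) :
    H.mul u x ∈ H.hadd (H.mul u y) (H.mul u z) := by
  rw [← H.distrib]; exact ⟨x, h, rfl⟩

theorem mul_neg (y x : F) : H.mul y (H.neg x) = H.neg (H.mul y x) :=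
  H.neg_unique _ _ (H.mul_zero y ▸ H.mul_mem_hadd (H.neg_mem x))

theorem neg_mul (y x : F) : H.mul (H.neg y) x = H.neg (H.mul y x) := by
  rw [H.mul_comm, H.mul_neg, H.mul_comm]

theorem neg_mem_hadd_neg {x y z : F} (h : x ∈ H.hadd y z) :
    H.neg x ∈ H.hadd (H.neg y) (H.neg z) := by
  simpa only [H.neg_mul, H.one_mul] using H.mul_mem_hadd (u := H.neg H.one) h

theorem neg_mem_hadd_neg_iff {x y z : F} :
    H.neg x ∈ H.hadd (H.neg y) (H.neg z) ↔ x ∈ H.hadd y z :=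
  ⟨fun h => by simpa only [H.neg_neg] using H.neg_mem_hadd_neg h, H.neg_mem_hadd_neg⟩

theorem mem_hadd_iff_mem_neg_hadd {x y z : F} : x ∈ H.hadd y z ↔ z ∈ H.hadd (H.neg y) x := by
  rw [H.reversible, ← H.neg_mem_hadd_neg_iff, H.neg_neg, H.neg_neg, H.hadd_comm, H.reversible z,
    H.neg_neg]

theorem mul_mul_cancel_left {u v : F} (huv : H.mul u v = H.one) (x : F) :
    H.mul v (H.mul u x) = x := by
  rw [← H.mul_assoc, H.mul_comm v u, huv, H.one_mul]

theorem mul_left_cancel {u v x y : F} (huv : H.mul u v = H.one) (h : H.mul u x = H.mul u y) :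
    x = y := by
  rw [← H.mul_mul_cancel_left huv x, h, H.mul_mul_cancel_left huv]

theorem mul_mem_hadd_iff {u v x y z : F} (huv : H.mul u v = H.one) :
    H.mul u x ∈ H.hadd (H.mul u y) (H.mul u z) ↔ x ∈ H.hadd y z := by
  refine ⟨fun h => ?_, H.mul_mem_hadd⟩
  simpa only [H.mul_mul_cancel_left huv] using H.mul_mem_hadd (u := v) h

theorem pow_zero (a : F) : H.pow a 0 = H.one := rfl

theorem pow_succ (a : F) (k : ℕ) : H.pow a (k + 1) = H.mul (H.pow a k) a := rfl

theorem pow_one (a : F) : H.pow a 1 = a := H.one_mul a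

theorem pow_mul_pow {a b : F} (hab : H.mul a b = H.one) (k : ℕ) :
    H.mul (H.pow a k) (H.pow b k) = H.one := by
  induction k with
  | zero => exact H.one_mul H.one
  | succ k ih =>
    rw [H.pow_succ, H.pow_succ, H.mul_assoc, ← H.mul_assoc a, H.mul_comm a, H.mul_assoc, hab,
      H.mul_one, ih]

theorem mem_hsum_succ_iff {f : ℕ → F} {n : ℕ} {x : F} :
    x ∈ H.hsum f (n + 1) ↔ ∃ y ∈ H.hsum f n, x ∈ H.hadd y (f (n + 1)) := by
  simp only [hsum, Set.mem_iUnion, exists_prop]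

theorem zero_mem_hsum_succ_iff {f : ℕ → F} {n : ℕ} :
    H.zero ∈ H.hsum f (n + 1) ↔ H.neg (f (n + 1)) ∈ H.hsum f n := by
  rw [H.mem_hsum_succ_iff]
  constructor
  · rintro ⟨y, hy, hfy⟩
    rwa [(H.zero_mem_hadd_iff.1 hfy), H.neg_neg]
  · exact fun h => ⟨_, h, H.zero_mem_hadd_iff.2 (H.neg_neg _).symm⟩

theorem mem_hsum_iff {f : ℕ → F} {n : ℕ} {x : F} :
    x ∈ H.hsum f n ↔ ∃ e : ℕ → F, e 0 = f 0 ∧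
      (∀ k < n, e (k + 1) ∈ H.hadd (e k) (f (k + 1))) ∧ e n = x := by
  induction n generalizing x with
  | zero =>
    refine ⟨fun hx => ⟨fun _ => x, hx, fun k hk => absurd hk k.not_lt_zero, rfl⟩, ?_⟩
    rintro ⟨e, he0, -, rfl⟩
    exact he0
  | succ n ih =>
    rw [H.mem_hsum_succ_iff]
    constructor
    · rintro ⟨y, hy, hxy⟩
      obtain ⟨e, he0, hstep, rfl⟩ := ih.1 hy
      refine ⟨Function.update e (n + 1) x, by simpa using he0, fun k hk => ?_, by simp⟩
      rcases Nat.lt_succ_iff_lt_or_eq.1 hk with hk | rfl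
      · simpa [Function.update_of_ne (show k + 1 ≠ n + 1 by omega),
          Function.update_of_ne (show k ≠ n + 1 by omega)] using hstep k hk
      · simpa using hxy
    · rintro ⟨e, he0, hstep, rfl⟩
      exact ⟨e n, ih.2 ⟨e, he0, fun k hk => hstep k (by omega), rfl⟩, hstep n n.lt_succ_self⟩

theorem hsum_eq_singleton {f : ℕ → F} (hf : ∀ i, f (i + 1) = H.zero) (n : ℕ) :
    H.hsum f n = {f 0} := by
  induction n with
  | zero => rfl
  | succ n ih =>
    ext x
    simp [H.mem_hsum_succ_iff, ih, hf, H.hadd_comm _ H.zero, H.zero_hadd]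

theorem hDivRel_succ_iff (a : F) (m : ℕ) (c d : ℕ → F) :
    HDivRel H a (m + 1) c d ↔ c 0 = H.mul (H.neg a) (d 0) ∧
      (∀ k < m, c (k + 1) ∈ H.hadd (H.mul (H.neg a) (d (k + 1))) (d k)) ∧ c (m + 1) = d m := by
  refine and_congr Iff.rfl (and_congr ⟨fun h k hk => ?_, fun h i hi₁ hi₂ => ?_⟩ Iff.rfl)
  · simpa using h (k + 1) (by omega) (by omega)
  · obtain ⟨k, rfl⟩ := Nat.exists_eq_add_of_le' hi₁
    simpa using h k (by omega)

theorem exists_hDivRel_zero_iff (m : ℕ) (c : ℕ → F) :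
    (∃ d, HDivRel H H.zero (m + 1) c d) ↔ c 0 = H.zero := by
  simp only [H.hDivRel_succ_iff, H.neg_zero, H.zero_mul, H.zero_hadd, Set.mem_singleton_iff]
  exact ⟨fun ⟨_, h, _⟩ => h, fun h => ⟨fun i => c (i + 1), h, fun _ _ => rfl, rfl⟩⟩

theorem zero_mem_hsum_succ_iff_exists_hDivRel {a : F} (ha : a ≠ H.zero) (c : ℕ → F) (m : ℕ) :
    H.zero ∈ H.hsum (fun i => H.mul (c i) (H.pow a i)) (m + 1) ↔
      ∃ d : ℕ → F, HDivRel H a (m + 1) c d := by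
  obtain ⟨b, hab⟩ := H.exists_inv a ha
  have hunit := H.pow_mul_pow hab
  set g : (ℕ → F) → ℕ → F := fun d i => H.neg (H.mul (H.pow a (i + 1)) (d i))
  have hg_surj : g.Surjective := fun e =>
    ⟨fun i => H.mul (H.pow b (i + 1)) (H.neg (e i)),
      funext fun i => by simp only [g, ← H.mul_assoc, hunit, H.one_mul, H.neg_neg]⟩
  rw [H.zero_mem_hsum_succ_iff, H.mem_hsum_iff, hg_surj.exists]
  refine exists_congr fun d => ?_
  simp only [g, H.hDivRel_succ_iff]
  have hscale : ∀ k t, H.mul (H.pow a (k + 1 + 1)) t = H.mul (H.pow a (k + 1)) (H.mul a t) :=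
    fun k t => H.mul_assoc _ _ _
  refine and_congr ?_ (and_congr (forall₂_congr fun k _ => ?_) ?_)
  · rw [H.pow_zero, H.mul_one, H.pow_one, H.neg_mul, eq_comm]
  · rw [H.reversible, H.neg_neg, H.neg_neg, hscale, H.mul_comm (c (k + 1)),
      H.mul_mem_hadd_iff (hunit (k + 1)), H.mem_hadd_iff_mem_neg_hadd, H.neg_mul]
  · rw [H.mul_comm (c (m + 1))]
    exact ⟨fun h => (H.mul_left_cancel (hunit (m + 1))
      (by simpa only [H.neg_neg] using congrArg H.neg h)).symm, fun h => by rw [h]⟩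

end Hyperfield

/-- Lemma A (roots): for a polynomial `p = Σ_{i=0}^n c_i T^i` over a hyperfield `F` and
`a ∈ F`, we have `0 ∈ ⊞ c_i a^i` if and only if there exist `d_0, …, d_{n-1}` with
`c_0 = -a·d_0`, `c_i ∈ (-a·d_i) ⊞ d_{i-1}` for `i = 1, …, n-1`, and `c_n = d_{n-1}`. -/
theorem hyperfield_root_iff {F : Type*} (H : Hyperfield F) (n : ℕ) (hn : 1 ≤ n)
    (c : ℕ → F) (a : F) :
    H.zero ∈ H.hsum (fun i => H.mul (c i) (H.pow a i)) n ↔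
      ∃ d : ℕ → F, HDivRel H a n c d := by
  obtain ⟨m, rfl⟩ := Nat.exists_eq_add_of_le' hn
  by_cases ha : a = H.zero
  · subst ha
    rw [H.hsum_eq_singleton (fun i => by simp only [H.pow_succ, H.mul_zero]),
      H.exists_hDivRel_zero_iff, Set.mem_singleton_iff, H.pow_zero, H.mul_one, eq_comm]
  · exact H.zero_mem_hsum_succ_iff_exists_hDivRel ha c m
end

section
/- Let K be a field, F a hyperfield, and f : K → F a hyperfield homomorphism. Let p = Σ c_i T^i ∈ K[T] and let p̄ = Σ f(c_i) T^i be the induced polynomial over F. Then for every b ∈ F, mult_b(p̄) ≥ Σ_{a ∈ f^{-1}(b)} mult_a(p), where mult_a(p) is the usual multiplicity of a as a root of p in K and mult_b(p̄) is the hyperfield root multiplicity. -/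
/-- `HMultGe H a n c m` says that the multiplicity of `a` as a root of the polynomial
`p = Σ_{i=0}^n c_i T^i` over the hyperfield `F` is at least `m`, following the recursive
definition `mult_a(p) = 1 + max { mult_a(q) : p ∈ (T-a)q }` (and `mult_a(p) = 0` if `a` is
not a root of `p`). -/
inductive HMultGe {F : Type*} (H : Hyperfield F) (a : F) : ℕ → (ℕ → F) → ℕ → Prop
  | zero (n : ℕ) (c : ℕ → F) : HMultGe H a n c 0
  | succ (n : ℕ) (c d : ℕ → F) (m : ℕ) (hn : 1 ≤ n) (hdiv : HDivRel H a n c d)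
      (hq : HMultGe H a (n - 1) d m) : HMultGe H a n c (m + 1)

/-! Each root `a` of `p` with `f a = b` splits off as `p = (T - a) q` in `K[T]`. Applying `f` to
the coefficient identities `p_i = -a q_i + q_{i-1}` and using `f (x + y) ∈ f x ⊞ f y` shows
`p̄ ∈ (T - b) q̄`, so the remaining roots of `q` over `b` are counted by induction on the
degree. -/

open Polynomial

theorem Hyperfield.map_neg_of_map_add_mem {K F : Type*} [Field K] (H : Hyperfield F) {f : K → F}
    (hf0 : f 0 = H.zero) (hfadd : ∀ a b : K, f (a + b) ∈ H.hadd (f a) (f b)) (x : K) :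
    f (-x) = H.neg (f x) :=
  H.neg_unique _ _ (by simpa [hf0] using hfadd x (-x))

theorem Polynomial.coeff_X_sub_C_mul_zero {R : Type*} [Ring R] (a : R) (q : R[X]) :
    ((X - C a) * q).coeff 0 = -a * q.coeff 0 := by
  simp [sub_mul]

theorem Polynomial.natDegree_X_sub_C_mul {R : Type*} [Ring R] [Nontrivial R] (a : R) {q : R[X]}
    (hq : q ≠ 0) : ((X - C a) * q).natDegree = q.natDegree + 1 := by
  rw [(monic_X_sub_C a).natDegree_mul' hq, natDegree_X_sub_C, add_comm]

theorem hDivRel_map_X_sub_C_mul {K F : Type*} [Field K] (H : Hyperfield F) {f : K → F}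
    (hf0 : f 0 = H.zero) (hfmul : ∀ a b : K, f (a * b) = H.mul (f a) (f b))
    (hfadd : ∀ a b : K, f (a + b) ∈ H.hadd (f a) (f b)) (a : K) {q : K[X]} (hq : q ≠ 0) :
    HDivRel H (f a) ((X - C a) * q).natDegree (fun i => f (((X - C a) * q).coeff i))
      (fun i => f (q.coeff i)) := by
  have hcoeff_succ (i : ℕ) :
      ((X - C a) * q).coeff (i + 1) = -a * q.coeff (i + 1) + q.coeff i := by
    rw [coeff_X_sub_C_mul]; ring
  have hmap_neg := H.map_neg_of_map_add_mem hf0 hfadd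
  refine ⟨?_, fun i hi _ => ?_, ?_⟩
  · simp only [coeff_X_sub_C_mul_zero, hfmul, hmap_neg]
  · obtain ⟨j, rfl⟩ : ∃ j, i = j + 1 := ⟨i - 1, by omega⟩
    simpa only [hcoeff_succ, hfmul, hmap_neg, Nat.add_sub_cancel] using
      hfadd (-a * q.coeff (j + 1)) (q.coeff j)
  · simp [natDegree_X_sub_C_mul a hq, hcoeff_succ]

open Classical in
theorem hMultGe_map_card_roots_filter {K F : Type*} [Field K] (H : Hyperfield F) {f : K → F}
    (hf0 : f 0 = H.zero) (hfmul : ∀ a b : K, f (a * b) = H.mul (f a) (f b))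
    (hfadd : ∀ a b : K, f (a + b) ∈ H.hadd (f a) (f b)) (p : K[X]) (b : F) :
    HMultGe H b p.natDegree (fun i => f (p.coeff i)) (p.roots.filter (fun a => f a = b)).card := by
  by_cases hb : ∃ a ∈ p.roots, f a = b
  · obtain ⟨a, ha, rfl⟩ := hb
    have hp : p ≠ 0 := ne_zero_of_mem_roots ha
    obtain ⟨q, rfl⟩ := dvd_iff_isRoot.2 (isRoot_of_mem_roots ha)
    have hq : q ≠ 0 := right_ne_zero_of_mul hp
    have hdeg := natDegree_X_sub_C_mul a hq
    rw [roots_mul hp, roots_X_sub_C, Multiset.singleton_add,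
      Multiset.filter_cons_of_pos (p := fun x => f x = f a) _ rfl, Multiset.card_cons]
    refine .succ _ _ _ _ (by omega) (hDivRel_map_X_sub_C_mul H hf0 hfmul hfadd a hq) ?_
    simpa [hdeg] using hMultGe_map_card_roots_filter H hf0 hfmul hfadd q (f a)
  · rw [Multiset.filter_eq_nil.2 fun a ha hab => hb ⟨a, ha, hab⟩]
    exact .zero _ _
termination_by p.natDegree
decreasing_by subst_vars; omega

open Classical in
theorem hyperfield_hom_mult_ge_general {K F : Type*} [Field K] (H : Hyperfield F) (f : K → F)
    (hf0 : f 0 = H.zero)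
    (hfmul : ∀ a b : K, f (a * b) = H.mul (f a) (f b))
    (hfadd : ∀ a b : K, f (a + b) ∈ H.hadd (f a) (f b))
    (p : Polynomial K) (b : F) :
    HMultGe H b p.natDegree (fun i => f (p.coeff i))
      (p.roots.filter (fun a => f a = b)).card :=
  hMultGe_map_card_roots_filter H hf0 hfmul hfadd p b

open Classical in
/-- Proposition A: if `f : K → F` is a homomorphism from a field `K` to a hyperfield `F`
and `p ∈ K[T]` is nonzero with image `p̄ = Σ f(c_i) T^i`, then for every `b ∈ F`,
`mult_b(p̄) ≥ Σ_{a ∈ f⁻¹(b)} mult_a(p)`. -/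
theorem hyperfield_hom_mult_ge {K F : Type*} [Field K] (H : Hyperfield F) (f : K → F)
    (hf0 : f 0 = H.zero) (hf1 : f 1 = H.one)
    (hfmul : ∀ a b : K, f (a * b) = H.mul (f a) (f b))
    (hfadd : ∀ a b : K, f (a + b) ∈ H.hadd (f a) (f b))
    (p : Polynomial K) (hp : p ≠ 0) (b : F) :
    HMultGe H b p.natDegree (fun i => f (p.coeff i))
      (p.roots.filter (fun a => f a = b)).card :=
  hyperfield_hom_mult_ge_general H f hf0 hfmul hfadd p b
end

section
/- For every polynomial p over the sign hyperfield S, mult_1(p) + mult_{-1}(p) + mult_0(p) ≤ deg(p). -/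
/-- Hyperaddition of the sign hyperfield `S = {0, 1, -1}`:
`x ⊞ 0 = {x}`, `1 ⊞ 1 = {1}`, `(-1) ⊞ (-1) = {-1}`, `1 ⊞ (-1) = {0,1,-1}`. -/
def shadd (a b : SignType) : Set SignType :=
  if a = 0 then {b} else if b = 0 then {a} else if a = b then {a} else Set.univ

/-- The hypersum `⊞_{i=0}^n f i` in the sign hyperfield. -/
def ssum (f : ℕ → SignType) : ℕ → Set SignType
  | 0 => {f 0}
  | n + 1 => ⋃ b ∈ ssum f n, shadd b (f (n + 1))

/-- `SDivRel a n c d` expresses `p ∈ (T - a) q` over the sign hyperfield, where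
`p = Σ_{i=0}^n c_i T^i` and `q = Σ_{i=0}^{n-1} d_i T^i`. -/
def SDivRel (a : SignType) (n : ℕ) (c d : ℕ → SignType) : Prop :=
  c 0 = -a * d 0 ∧
  (∀ i, 1 ≤ i → i ≤ n - 1 → c i ∈ shadd (-a * d i) (d (i - 1))) ∧
  c n = d (n - 1)

/-- `SMultGe a n c m`: the multiplicity of `a` as a root of `p = Σ_{i=0}^n c_i T^i` over
the sign hyperfield is at least `m` (recursively, `mult_a(p) = 0` if `a` is not a root and
`mult_a(p) = 1 + max { mult_a(q) : p ∈ (T-a)q }` otherwise). -/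
inductive SMultGe (a : SignType) : ℕ → (ℕ → SignType) → ℕ → Prop
  | zero (n : ℕ) (c : ℕ → SignType) : SMultGe a n c 0
  | succ (n : ℕ) (c d : ℕ → SignType) (m : ℕ) (hn : 1 ≤ n) (hdiv : SDivRel a n c d)
      (hq : SMultGe a (n - 1) d m) : SMultGe a n c (m + 1)

/-!
Descartes' rule of signs holds over `S`: dividing by `T - 1` removes at least one sign change,
so `mult_1(p)` is at most the number `V(p)` of sign changes of the coefficients, and likewise
`mult_{-1}(p) ≤ V(p(-T))` since `T ↦ -T` carries roots `-1` to roots `1`. `mult_0(p) ≥ m` forces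
the coefficients below `T^m` to vanish. Finally, for two consecutive nonzero coefficients at
distance `g`, the pair contributes a sign change to `p` and to `p(-T)` together at most
`min 2 g ≤ g` times (exactly once if `g` is odd), so `V(p) + V(p(-T))` is at most the distance from
the lowest to the highest nonzero coefficient, which is at most `deg p - mult_0(p)`.
-/

theorem mem_shadd_iff {a b x : SignType} :
    x ∈ shadd a b ↔ (a = 0 → x = b) ∧ (b = 0 → x = a) ∧ (a = b → x = a) := by
  unfold shadd; split_ifs <;> simp_all

theorem mul_mem_shadd (s : SignType) {a b x : SignType} (h : x ∈ shadd a b) :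
    s * x ∈ shadd (s * a) (s * b) := by
  rw [mem_shadd_iff] at *; revert s a b x; decide

theorem SignType.mul_self_of_ne_zero {s : SignType} (hs : s ≠ 0) : s * s = 1 := by
  revert s; decide

namespace SMultGe

variable {a : SignType} {n m : ℕ} {c : ℕ → SignType}

theorem le (h : SMultGe a n c m) : m ≤ n := by
  induction h with
  | zero => exact Nat.zero_le _
  | succ n _ _ _ hn _ _ ih => omega

theorem const_mul (u : SignType) (h : SMultGe a n c m) : SMultGe a n (fun i => u * c i) m := by
  induction h with
  | zero => exact .zero _ _
  | succ n c d m hn hdiv _ ih =>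
    obtain ⟨h0, hmid, htop⟩ := hdiv
    refine .succ n _ _ m hn ⟨?_, fun i h1 h2 => ?_, ?_⟩ ih
    · simp only [h0, mul_left_comm]
    · simpa only [mul_left_comm u] using mul_mem_shadd u (hmid i h1 h2)
    · simp only [htop]

/-- If `p ∈ (T - a) q` then `p(sT) ∈ (T - s a) (s q(sT))`, as `s² = 1`. -/
theorem comp_mul_X {s : SignType} (hs : s ≠ 0) (h : SMultGe a n c m) :
    SMultGe (s * a) n (fun i => s ^ i * c i) m := by
  have hss := SignType.mul_self_of_ne_zero hs
  induction h with
  | zero => exact .zero _ _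
  | succ n c d m hn hdiv _ ih =>
    obtain ⟨h0, hmid, htop⟩ := hdiv
    have hshift : ∀ i, -(s * a) * (s ^ (i + 1) * d i) = s ^ i * (-a * d i) := by
      intro i
      simp only [pow_succ, neg_mul, mul_neg, neg_inj]
      calc s * a * (s ^ i * s * d i) = s ^ i * (a * d i) * (s * s) := by ac_rfl
        _ = s ^ i * (a * d i) := by rw [hss, mul_one]
    refine .succ n _ (fun i => s ^ (i + 1) * d i) m hn ⟨?_, fun i h1 h2 => ?_, ?_⟩ ?_
    · simpa [h0] using (hshift 0).symm
    · dsimp only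
      rw [hshift, Nat.sub_add_cancel h1]
      exact mul_mem_shadd _ (hmid i h1 h2)
    · simp only [htop, Nat.sub_add_cancel hn]
    · simpa only [pow_succ, mul_comm _ s, mul_assoc] using ih.const_mul s

theorem coeff_eq_zero (h : SMultGe 0 n c m) {i : ℕ} (hi : i < m) : c i = 0 := by
  induction h generalizing i with
  | zero => omega
  | succ n c d m hn hdiv hq ih =>
    obtain ⟨h0, hmid, htop⟩ := hdiv
    obtain _ | i := i
    · simpa using h0
    · have := hq.le
      rcases Nat.lt_or_ge (i + 1) n with hin | hin
      · simpa [mem_shadd_iff, ih (by omega : i < m)] using hmid (i + 1) (by omega) (by omega)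
      · obtain rfl : i + 1 = n := by omega
        simpa [htop] using ih (by omega)

end SMultGe

/-- The last nonzero entry among `c 0, …, c k`, and `0` if there is none. -/
def lastSign (c : ℕ → SignType) : ℕ → SignType
  | 0 => c 0
  | k + 1 => if c (k + 1) = 0 then lastSign c k else c (k + 1)

def signChanges (c : ℕ → SignType) : ℕ → ℕ
  | 0 => 0
  | k + 1 => signChanges c k + if lastSign c k * c (k + 1) = -1 then 1 else 0

theorem lastSign_of_ne_zero {c : ℕ → SignType} {k : ℕ} (h : c k ≠ 0) : lastSign c k = c k := by
  cases k <;> simp [lastSign, h]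

theorem lastSign_eq_zero_iff {c : ℕ → SignType} {k : ℕ} :
    lastSign c k = 0 ↔ ∀ i ≤ k, c i = 0 := by
  induction k with
  | zero => simp [lastSign]
  | succ k ih =>
    by_cases h : c (k + 1) = 0
    · simp [lastSign, h, ih, Nat.le_succ_iff_eq_or_le]
    · rw [lastSign, if_neg h]
      exact iff_of_false h fun hall => h (hall _ le_rfl)

/-- One coefficient of `p ∈ (T - 1) q`: with `x = c (k+1)`, `s = d (k+1)`, `t = d k` and the
last signs `Lc`, `Ld` of the prefixes up to `k`. -/
theorem signChanges_step_div_X_sub_one : ∀ s t x Lc Ld : SignType, x ∈ shadd (-s) t →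
    (t ≠ 0 → Ld = t) →
    (if Ld * s = -1 then 1 else 0) +
        (if (if x = 0 then Lc else x) = -(if s = 0 then Ld else s) then 0 else 1) ≤
      (if Lc * x = -1 then 1 else 0) + (if Lc = -Ld then 0 else 1) := by
  simp only [mem_shadd_iff]; decide

theorem signChanges_add_one_le_of_sDivRel {n : ℕ} {c d : ℕ → SignType} (hn : 1 ≤ n)
    (h : SDivRel 1 n c d) (hc : c n ≠ 0) : signChanges d (n - 1) + 1 ≤ signChanges c n := by
  obtain ⟨h0, hmid, htop⟩ := h
  -- The prefixes of `p` gain a sign change over those of `q` unless their last signs are opposite;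
  -- at the top, `c n = d (n-1)` turns opposite last signs into one more sign change of `p`.
  have inv : ∀ k ≤ n - 1, signChanges d k + (if lastSign c k = -lastSign d k then 0 else 1) ≤
      signChanges c k := by
    intro k hk
    induction k with
    | zero => simp [lastSign, signChanges, h0]
    | succ k ih =>
      have hstep := signChanges_step_div_X_sub_one (d (k + 1)) (d k) (c (k + 1)) (lastSign c k)
        (lastSign d k) (by simpa using hmid (k + 1) (by omega) hk) lastSign_of_ne_zero
      have := ih (by omega)
      rw [signChanges, signChanges, lastSign.eq_2, lastSign.eq_2]
      omega
  obtain ⟨k, rfl⟩ : ∃ k, n = k + 1 := ⟨n - 1, by omega⟩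
  have hlast : lastSign d k = c (k + 1) := by
    rw [htop, Nat.add_sub_cancel, lastSign_of_ne_zero (htop ▸ hc)]
  have hflip : ∀ L x : SignType, x ≠ 0 →
      1 ≤ (if L = -x then 0 else 1) + if L * x = -1 then 1 else 0 := by decide
  have := inv k (by omega)
  have := hflip (lastSign c k) _ hc
  simp only [signChanges, Nat.add_sub_cancel, hlast] at *
  omega

theorem SMultGe.le_signChanges {n m : ℕ} {c : ℕ → SignType} (h : SMultGe 1 n c m)
    (hc : c n ≠ 0) : m ≤ signChanges c n := by
  induction h with
  | zero => exact Nat.zero_le _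
  | succ n c d m hn hdiv _ ih =>
    have := signChanges_add_one_le_of_sDivRel hn hdiv hc
    have := ih (hdiv.2.2 ▸ hc)
    omega

/-- One coefficient `x = c (k+1)` of `p` and `p(-T)`, where `ε = (-1)^k` and `s`, `s'` are the last
signs of the prefixes of `p` and `p(-T)` up to `k`. -/
theorem signChanges_step_comp_neg : ∀ s s' x ε : SignType, ε ≠ 0 → (s = 0 ↔ s' = 0) →
    (if s * x = -1 then 1 else 0) + (if s' * (-ε * x) = -1 then 1 else 0) +
        (if (if x = 0 then s else x) ≠ 0 ∧
            (if -ε * x = 0 then s' else -ε * x) = ε * (if x = 0 then s else x) then 1 else 0) ≤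
      (if s ≠ 0 ∧ s' = -ε * s then 1 else 0) + (if s = 0 then 0 else 1) := by
  decide

theorem signChanges_add_signChanges_comp_neg_add_le {n z : ℕ} {c : ℕ → SignType}
    (hc : c n ≠ 0) (hz : ∀ i < z, c i = 0) :
    signChanges c n + signChanges (fun i => (-1) ^ i * c i) n + z ≤ n := by
  set c' : ℕ → SignType := fun i => (-1) ^ i * c i
  have hzero : ∀ k, lastSign c k = 0 ↔ lastSign c' k = 0 := by
    simp [lastSign_eq_zero_iff, c']
  -- The indicator holds iff the distance from `k` back to the last nonzero coefficient is odd;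
  -- then the next nonzero coefficient may add two sign changes at once.
  have inv : ∀ k, (lastSign c k = 0 ∧ signChanges c k + signChanges c' k = 0) ∨
      signChanges c k + signChanges c' k + z +
        (if lastSign c k ≠ 0 ∧ lastSign c' k = -(-1) ^ k * lastSign c k then 1 else 0) ≤ k := by
    intro k
    induction k with
    | zero =>
      by_cases h0 : c 0 = 0
      · simp [lastSign, signChanges, h0]
      · have : z = 0 := by by_contra hz0; exact h0 (hz 0 (by omega))
        right
        simp [lastSign, signChanges, c', this, h0]
    | succ k ih =>
      have hstep := signChanges_step_comp_neg (lastSign c k) (lastSign c' k) (c (k + 1))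
        ((-1) ^ k) (pow_ne_zero _ (by decide)) (hzero k)
      have hc'succ : c' (k + 1) = -(-1) ^ k * c (k + 1) := by simp [c', pow_succ]
      rw [signChanges, signChanges, lastSign.eq_2, lastSign.eq_2, hc'succ, pow_succ, mul_neg_one,
        neg_neg]
      rcases ih with ⟨hL, hW⟩ | ih
      · have hL' := (hzero k).mp hL
        by_cases hx : c (k + 1) = 0
        · left
          simp [hx, hL, hL', hW]
        · right
          have : z ≤ k + 1 := by by_contra hzk; exact hx (hz _ (by omega))
          have hodd : (if lastSign c k ≠ 0 ∧ lastSign c' k = -(-1) ^ k * lastSign c k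
            then 1 else 0) = 0 := if_neg fun h => h.1 hL
          rw [hodd, if_pos hL] at hstep
          omega
      · right
        have : (if lastSign c k = 0 then 0 else 1) ≤ 1 := by split_ifs <;> omega
        omega
  rcases inv n with ⟨hL, -⟩ | h
  · exact absurd (lastSign_of_ne_zero hc ▸ hL) hc
  · omega

/-- For every polynomial `p = Σ_{i=0}^n c_i T^i` of degree `n` over the sign hyperfield,
`mult_1(p) + mult_{-1}(p) + mult_0(p) ≤ deg p`. -/
theorem sum_mult_le_deg (n : ℕ) (c : ℕ → SignType) (hc : c n ≠ 0) :
    ∀ m₁ m₂ m₀ : ℕ, SMultGe 1 n c m₁ → SMultGe (-1) n c m₂ → SMultGe 0 n c m₀ →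
      m₁ + m₂ + m₀ ≤ n := by
  intro m₁ m₂ m₀ h₁ h₂ h₀
  have h₂' : SMultGe 1 n (fun i => (-1) ^ i * c i) m₂ := by
    simpa using h₂.comp_mul_X (s := -1) (by decide)
  have hc' : (-1) ^ n * c n ≠ 0 := mul_ne_zero (pow_ne_zero _ (by decide)) hc
  calc m₁ + m₂ + m₀ ≤ signChanges c n + signChanges (fun i => (-1) ^ i * c i) n + m₀ := by
        gcongr
        exacts [h₁.le_signChanges hc, h₂'.le_signChanges hc']
    _ ≤ n := signChanges_add_signChanges_comp_neg_add_le hc fun _ hi => h₀.coeff_eq_zero hi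
end

section
/- Let p(T) = T^2 + T + 1 be a polynomial over the weak sign hyperfield W. Then both 1 and -1 are roots of p of multiplicity exactly 2; in particular the sum of multiplicities of roots of p exceeds its degree. -/
/-- Hyperaddition of the weak sign hyperfield `W = {0, 1, -1}`:
`x ⊞ 0 = {x}`, `1 ⊞ 1 = (-1) ⊞ (-1) = {1,-1}`, `1 ⊞ (-1) = {0,1,-1}`. -/
def whadd (a b : SignType) : Set SignType :=
  if a = 0 then {b} else if b = 0 then {a} else if a = b then {1, -1} else Set.univ

/-- `WDivRel a n c d` expresses `p ∈ (T - a) q` over the weak sign hyperfield. -/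
def WDivRel (a : SignType) (n : ℕ) (c d : ℕ → SignType) : Prop :=
  c 0 = -a * d 0 ∧
  (∀ i, 1 ≤ i → i ≤ n - 1 → c i ∈ whadd (-a * d i) (d (i - 1))) ∧
  c n = d (n - 1)

/-- `WMultGe a n c m`: the multiplicity of `a` as a root of `p = Σ_{i=0}^n c_i T^i` over the
weak sign hyperfield is at least `m`. -/
inductive WMultGe (a : SignType) : ℕ → (ℕ → SignType) → ℕ → Prop
  | zero (n : ℕ) (c : ℕ → SignType) : WMultGe a n c 0
  | succ (n : ℕ) (c d : ℕ → SignType) (m : ℕ) (hn : 1 ≤ n) (hdiv : WDivRel a n c d)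
      (hq : WMultGe a (n - 1) d m) : WMultGe a n c (m + 1)

def coeffsXSub (a : SignType) : ℕ → SignType := fun i => if i = 0 then -a else if i = 1 then 1 else 0

theorem WMultGe.le_degree {a : SignType} {n : ℕ} {c : ℕ → SignType} {m : ℕ}
    (h : WMultGe a n c m) : m ≤ n := by
  induction h with
  | zero => exact Nat.zero_le _
  | succ _ _ _ _ hn _ _ ih => omega

theorem wMultGe_coeffsXSub (a : SignType) : WMultGe a 1 (coeffsXSub a) 1 :=
  .succ 1 _ (fun _ => 1) 0 le_rfl
    ⟨by simp [coeffsXSub], fun i hi hi' => absurd hi' (by omega), rfl⟩ (.zero _ _)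

/-- The source of the pathology: `1 ∈ (-a) ⊞ (-a)` for both nonzero signs `a`. -/
theorem wDivRel_sq_add_X_add_one {a : SignType} (ha : a ≠ 0) :
    WDivRel a 2 (fun i => if i ≤ 2 then 1 else 0) (coeffsXSub a) := by
  refine ⟨?_, fun i hi hi' => ?_, rfl⟩
  · cases a <;> simp_all [coeffsXSub]
  · obtain rfl : i = 1 := by omega
    cases a <;> simp_all [coeffsXSub, whadd]

theorem wMultGe_sq_add_X_add_one {a : SignType} (ha : a ≠ 0) :
    WMultGe a 2 (fun i => if i ≤ 2 then 1 else 0) 2 :=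
  .succ 2 _ _ 1 (by norm_num) (wDivRel_sq_add_X_add_one ha) (wMultGe_coeffsXSub a)

/-- Over the weak sign hyperfield, both `1` and `-1` are roots of `p(T) = T² + T + 1` of
multiplicity exactly `2`; in particular the sum of the multiplicities of the roots of `p`
exceeds its degree `2`. -/
theorem weak_sign_pathology :
    (WMultGe 1 2 (fun i => if i ≤ 2 then 1 else 0) 2 ∧
      ¬ WMultGe 1 2 (fun i => if i ≤ 2 then 1 else 0) 3) ∧
    (WMultGe (-1) 2 (fun i => if i ≤ 2 then 1 else 0) 2 ∧
      ¬ WMultGe (-1) 2 (fun i => if i ≤ 2 then 1 else 0) 3) ∧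
    2 + 2 > 2 :=
  ⟨⟨wMultGe_sq_add_X_add_one (by decide), fun h => absurd h.le_degree (by norm_num)⟩,
    ⟨wMultGe_sq_add_X_add_one (by decide), fun h => absurd h.le_degree (by norm_num)⟩,
    by norm_num⟩
end

section
/- Let p(T) = c_r T^r + c_{r+1}T^{r+1} + ⋯ + c_n T^n be a polynomial over the Krasner hyperfield K with c_r ≠ 0 and c_n ≠ 0. Then mult_0(p) = r and mult_1(p) = n - r. -/
/-- Hyperaddition of the Krasner hyperfield `K = {0, 1}` (realized as `Bool`, with
`false = 0` and `true = 1`): `0 ⊞ x = x ⊞ 0 = {x}` and `1 ⊞ 1 = {0, 1}`. -/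
def khadd (a b : Bool) : Set Bool :=
  if a = false then {b} else if b = false then {a} else {false, true}

/-- Powers in the Krasner hyperfield (multiplication is `Bool.and`). -/
def kpow (a : Bool) : ℕ → Bool
  | 0 => true
  | n + 1 => kpow a n && a

/-- The hypersum `⊞_{i=0}^n f i` in the Krasner hyperfield. -/
def ksum (f : ℕ → Bool) : ℕ → Set Bool
  | 0 => {f 0}
  | n + 1 => ⋃ b ∈ ksum f n, khadd b (f (n + 1))

/-- `KDivRel a n c d` expresses `p ∈ (T - a) q` over the Krasner hyperfield (here
`-x = x`). -/
def KDivRel (a : Bool) (n : ℕ) (c d : ℕ → Bool) : Prop :=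
  c 0 = (a && d 0) ∧
  (∀ i, 1 ≤ i → i ≤ n - 1 → c i ∈ khadd (a && d i) (d (i - 1))) ∧
  c n = d (n - 1)

/-- `KMultGe a n c m`: the multiplicity of `a` as a root of `p = Σ_{i=0}^n c_i T^i` over
the Krasner hyperfield is at least `m`. -/
inductive KMultGe (a : Bool) : ℕ → (ℕ → Bool) → ℕ → Prop
  | zero (n : ℕ) (c : ℕ → Bool) : KMultGe a n c 0
  | succ (n : ℕ) (c d : ℕ → Bool) (m : ℕ) (hn : 1 ≤ n) (hdiv : KDivRel a n c d)
      (hq : KMultGe a (n - 1) d m) : KMultGe a n c (m + 1)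

/-!
Dividing by `T - 0 = T` only shifts coefficients, so `mult_0` counts the vanishing low
coefficients. For the root `1`, the absorbing sum `1 ⊞ 1 = K` gives
`p ∈ (T - 1)(T^r + ⋯ + T^{n-1})` whatever the middle coefficients of `p` are, so
`mult_1(p) ≥ n - r` by induction on `n - r`. Conversely, since `x ⊞ 0 = {x}`, any `q` with
`p ∈ (T - 1) q` agrees with `p` up to degree `r`; hence `q` again has lowest degree `r`, has
degree `n - 1`, and `mult_1(p) ≤ n - r` by the same induction.
-/

@[simp]
lemma khadd_false_left (b : Bool) : khadd false b = {b} := by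
  simp [khadd]

@[simp]
lemma khadd_false_right (a : Bool) : khadd a false = {a} := by
  cases a <;> simp [khadd]

@[simp]
lemma mem_khadd_true_true (x : Bool) : x ∈ khadd true true := by
  cases x <;> simp [khadd]

namespace KMultGe

variable {a : Bool} {n m : ℕ} {c : ℕ → Bool}

lemma le (h : KMultGe a n c m) : m ≤ n := by
  induction h with
  | zero => exact Nat.zero_le _
  | succ _ _ _ _ hn _ _ ih => omega

lemma false_coeff_eq_false_of_lt (h : KMultGe false n c m) {i : ℕ} (hi : i < m) :
    c i = false := by
  induction h generalizing i with
  | zero => omega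
  | succ n c d m hn hdiv hq ih =>
    have hmn := hq.le
    obtain ⟨hc0, hmid, hcn⟩ := hdiv
    rcases Nat.eq_zero_or_pos i with rfl | hi0
    · simpa using hc0
    · have hci : c i = d (i - 1) := by
        rcases Nat.lt_or_ge i n with hin | hin
        · simpa using hmid i hi0 (by omega)
        · rwa [show i = n by omega]
      rw [hci, ih (by omega)]

end KMultGe

lemma kMultGe_false_of_coeff_eq_false {r n : ℕ} {c : ℕ → Bool} (hrn : r ≤ n)
    (hlow : ∀ i < r, c i = false) : KMultGe false n c r := by
  induction r generalizing n c with
  | zero => exact .zero n c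
  | succ r ih =>
    refine .succ n c (fun i => c (i + 1)) r (by omega) ⟨?_, fun i hi _ => ?_, ?_⟩
      (ih (by omega) fun i hi => hlow (i + 1) (by omega))
    · simp [hlow 0 (by omega)]
    · simp [Nat.sub_add_cancel hi]
    · simp [Nat.sub_add_cancel (show 1 ≤ n by omega)]

lemma kMultGe_true_of_lowest_coeff {r k n : ℕ} {c : ℕ → Bool} (hrkn : r + k = n)
    (hlow : ∀ i < r, c i = false) (hcr : c r = true) (hcn : c n = true) :
    KMultGe true n c k := by
  induction k generalizing n c with
  | zero => exact .zero n c
  | succ k ih =>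
    -- `d` encodes `T^r + ⋯ + T^{n-1}`
    set d : ℕ → Bool := fun i => decide (r ≤ i ∧ i ≤ n - 1) with hd
    have hd_iff (i : ℕ) : d i = true ↔ r ≤ i ∧ i ≤ n - 1 := by simp [hd]
    have hd_false {i : ℕ} (hi : i < r) : d i = false := by
      rw [Bool.eq_false_iff, ne_eq, hd_iff]
      omega
    have hd_true {i : ℕ} (hri : r ≤ i) (hin : i ≤ n - 1) : d i = true :=
      (hd_iff i).2 ⟨hri, hin⟩
    refine .succ n c d k (by omega) ⟨?_, fun i hi hin => ?_, ?_⟩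
      (ih (by omega) (fun i => hd_false) (hd_true le_rfl (by omega)) (hd_true (by omega) le_rfl))
    · rcases Nat.eq_zero_or_pos r with rfl | hr
      · simpa [hd_true le_rfl (by omega : 0 ≤ n - 1)] using hcr
      · simpa [hd_false hr] using hlow 0 hr
    · rcases lt_trichotomy i r with hir | rfl | hri
      · simp [hd_false hir, hd_false (show i - 1 < r by omega), hlow i hir]
      · simp [hd_true le_rfl hin, hd_false (show i - 1 < i by omega), hcr]
      · simp [hd_true hri.le hin, hd_true (show r ≤ i - 1 by omega) (show i - 1 ≤ n - 1 by omega)]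
    · rw [hd_true (by omega) le_rfl, hcn]

lemma KDivRel.true_quot_eq_coeff_of_le {n r : ℕ} {c d : ℕ → Bool} (hdiv : KDivRel true n c d)
    (hlow : ∀ i < r, c i = false) {i : ℕ} (hir : i ≤ r) (hin : i ≤ n - 1) : d i = c i := by
  induction i with
  | zero => simpa using hdiv.1.symm
  | succ i ih =>
    have hdi : d i = false := by rw [ih (by omega) (by omega)]; exact hlow i (by omega)
    have hci := hdiv.2.1 (i + 1) (by omega) hin
    simp only [Nat.add_sub_cancel, hdi, khadd_false_right, Bool.true_and,
      Set.mem_singleton_iff] at hci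
    exact hci.symm

lemma KMultGe.true_le_sub {n m r : ℕ} {c : ℕ → Bool} (h : KMultGe true n c m) (hrn : r ≤ n)
    (hlow : ∀ i < r, c i = false) (hcr : c r = true) : m ≤ n - r := by
  induction h with
  | zero => exact Nat.zero_le _
  | succ n c d m hn hdiv hq ih =>
    have hdc {i : ℕ} (hir : i ≤ r) (hin : i ≤ n - 1) : d i = c i :=
      hdiv.true_quot_eq_coeff_of_le hlow hir hin
    rcases Nat.lt_or_ge r n with hrn' | hrn'
    · have := ih (by omega) (fun i hi => (hdc hi.le (by omega)).trans (hlow i hi))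
        ((hdc le_rfl (by omega)).trans hcr)
      omega
    · have hcn : c n = false := by
        rw [hdiv.2.2, hdc (by omega) le_rfl]
        exact hlow (n - 1) (by omega)
      simp [show r = n by omega, hcn] at hcr

/-- For a polynomial `p = c_r T^r + ⋯ + c_n T^n` over the Krasner hyperfield with
`c_r ≠ 0` and `c_n ≠ 0`, we have `mult_0(p) = r` and `mult_1(p) = n - r`. -/
theorem krasner_mult (r n : ℕ) (hrn : r ≤ n) (c : ℕ → Bool)
    (hcr : c r = true) (hcn : c n = true) (hlow : ∀ i, i < r → c i = false) :
    (KMultGe false n c r ∧ ¬ KMultGe false n c (r + 1)) ∧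
    (KMultGe true n c (n - r) ∧ ¬ KMultGe true n c (n - r + 1)) := by
  refine ⟨⟨kMultGe_false_of_coeff_eq_false hrn hlow, fun h => ?_⟩,
    ⟨kMultGe_true_of_lowest_coeff (by omega) hlow hcr hcn, fun h => ?_⟩⟩
  · simp [h.false_coeff_eq_false_of_lt (Nat.lt_succ_self r)] at hcr
  · have := h.true_le_sub hrn hlow hcr
    omega
end

section
/- Descartes' rule of signs: Let p = Σ c_i T^i be a nonzero real polynomial. Then the number of positive real roots of p, counted with multiplicity, is at most the number of sign changes in the sequence of nonzero coefficients c_0, c_1, …, c_n. Moreover equality holds if p splits into linear factors over ℝ. -/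
open Polynomial

/-- The number of sign changes in the coefficient sequence of a real polynomial:
the number of indices `i` such that `c_i` and the next nonzero coefficient `c_{i+k}`
have opposite signs. -/
noncomputable def realSignChanges (p : Polynomial ℝ) : ℕ :=
  Nat.card {i : ℕ | ∃ k, 1 ≤ k ∧ p.coeff i * p.coeff (i + k) < 0 ∧
    ∀ j, i < j → j < i + k → p.coeff j = 0}

/-!
The bound is Mathlib's `Polynomial.roots_countP_pos_le_signVariations`, once `realSignChanges`
is identified with `signVariations`: both satisfy the same recursion under `eraseLead`.

For the equality, count the sign changes of `p(X)` and `p(-X)` together. If `c_e, c_d` are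
consecutive nonzero coefficients, the signs of `c_e c_d` and `(-1)^(d-e) c_e c_d` are opposite
when `d = e + 1`, so the pair contributes at most `d - e` sign changes in total, and
`V(p) + V(p(-X)) ≤ deg p - ord₀ p`. If `p` splits, its positive roots, its negative roots
(the positive roots of `p(-X)`) and its `ord₀ p`-fold root `0` make up all `deg p` roots,
so both bounds `#pos ≤ V(p)` and `#neg ≤ V(p(-X))` must be equalities.
-/

theorem sign_eq_neg_sign_iff_mul_neg {α : Type*} [Ring α] [LinearOrder α] [IsStrictOrderedRing α]
    {a b : α} (ha : a ≠ 0) : SignType.sign a = -SignType.sign b ↔ a * b < 0 := by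
  rcases ha.lt_or_gt with ha | ha <;> rcases lt_trichotomy b 0 with hb | hb | hb
  all_goals simp [ha, hb, mul_neg_of_neg_of_pos, mul_neg_of_pos_of_neg, mul_pos_of_neg_of_neg,
    le_of_lt]

theorem Multiset.card_filter_pos_add_card_filter_neg_add_count_zero {α : Type*} [LinearOrder α]
    [Zero α] (s : Multiset α) :
    (s.filter (0 < ·)).card + (s.filter (· < 0)).card + s.count 0 = s.card := by
  induction s using Multiset.induction_on with
  | empty => simp
  | cons a s ih =>
    rcases lt_trichotomy a 0 with ha | rfl | ha
    · simp [ha, ha.not_gt, Multiset.count_cons_of_ne ha.ne']; omega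
    · simp; omega
    · simp [ha, ha.not_gt, Multiset.count_cons_of_ne ha.ne]; omega

namespace Polynomial

theorem card_roots_filter_neg_eq_comp_neg_X {R : Type*} [CommRing R] [IsDomain R] [LinearOrder R]
    [IsOrderedRing R] (p : R[X]) :
    (p.roots.filter (· < 0)).card = ((p.comp (-X)).roots.filter (0 < ·)).card := by
  simp [roots_comp_neg_X, Multiset.filter_map]

theorem eraseLead_comp_neg_X {R : Type*} [CommRing R] (p : R[X]) :
    (p.comp (-X)).eraseLead = p.eraseLead.comp (-X) := by
  rw [← self_sub_C_mul_X_pow, ← self_sub_C_mul_X_pow p, sub_comp,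
    natDegree_eq_of_degree_eq degree_comp_neg_X, comp_neg_X_leadingCoeff_eq,
    mul_comp, C_comp, X_pow_comp, neg_pow (X : R[X]), map_mul, map_pow, map_neg, map_one]
  ring

theorem natTrailingDegree_le_natTrailingDegree_eraseLead {R : Type*} [Semiring R] {p : R[X]}
    (h : p.eraseLead ≠ 0) : p.natTrailingDegree ≤ p.eraseLead.natTrailingDegree := by
  apply natTrailingDegree_le_of_ne_zero
  have hlt := (natTrailingDegree_le_natDegree _).trans_lt
    ((eraseLead_natDegree_lt_or_eraseLead_eq_zero p).resolve_right h)
  rw [← eraseLead_coeff_of_ne _ hlt.ne]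
  exact trailingCoeff_nonzero_iff_nonzero.mpr h

section SignChangeIndices

variable {R : Type*} [Semiring R] [Preorder R]

def signChangeIndices (p : R[X]) : Set ℕ :=
  {i | ∃ j, i < j ∧ p.coeff i * p.coeff j < 0 ∧ ∀ m, i < m → m < j → p.coeff m = 0}

theorem lt_natDegree_of_mem_signChangeIndices {p : R[X]} {i : ℕ}
    (hi : i ∈ signChangeIndices p) : i < p.natDegree := by
  obtain ⟨j, hij, hneg, -⟩ := hi
  have hj : p.coeff j ≠ 0 := fun h => by simp [h] at hneg
  exact hij.trans_le (le_natDegree_of_ne_zero hj)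

theorem signChangeIndices_finite (p : R[X]) : (signChangeIndices p).Finite :=
  (Set.finite_Iio p.natDegree).subset fun _ => lt_natDegree_of_mem_signChangeIndices

theorem signChangeIndices_eq_empty_of_eraseLead_eq_zero {p : R[X]} (h : p.eraseLead = 0) :
    signChangeIndices p = ∅ := by
  have hcoeff : ∀ i, i ≠ p.natDegree → p.coeff i = 0 := fun i hi => by
    rw [← eraseLead_coeff_of_ne i hi, h, coeff_zero]
  refine Set.eq_empty_of_forall_notMem ?_
  rintro i ⟨j, hij, hneg, -⟩
  have hi : i = p.natDegree := by_contra fun hi => by simp [hcoeff i hi] at hneg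
  have hj : j = p.natDegree := by_contra fun hj => by simp [hcoeff j hj] at hneg
  omega

theorem mem_signChangeIndices_iff_of_eraseLead_ne_zero {p : R[X]} (h : p.eraseLead ≠ 0) {i : ℕ} :
    i ∈ signChangeIndices p ↔ i ∈ signChangeIndices p.eraseLead ∨
      i = p.eraseLead.natDegree ∧ p.eraseLead.leadingCoeff * p.leadingCoeff < 0 := by
  set q := p.eraseLead
  set d := p.natDegree
  set e := q.natDegree
  have hed : e < d := (eraseLead_natDegree_lt_or_eraseLead_eq_zero p).resolve_right h
  have hagree : ∀ i, i ≠ d → p.coeff i = q.coeff i := fun i hi => (eraseLead_coeff_of_ne i hi).symm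
  have hgap : ∀ i, e < i → i ≠ d → p.coeff i = 0 := fun i hei hid => by
    rw [hagree i hid, coeff_eq_zero_of_natDegree_lt hei]
  have hqe : q.coeff e ≠ 0 := mt leadingCoeff_eq_zero.mp h
  constructor
  · rintro ⟨j, hij, hneg, hzero⟩
    have hi : p.coeff i ≠ 0 := fun h => by simp [h] at hneg
    have hj : p.coeff j ≠ 0 := fun h => by simp [h] at hneg
    have hjd : j ≤ d := le_natDegree_of_ne_zero hj
    have hie : i ≤ e := by_contra fun hie => hi (hgap i (by omega) (by omega))
    rcases hjd.lt_or_eq with hjd | rfl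
    · have hje : j ≤ e := by_contra fun hje => hj (hgap j (by omega) hjd.ne)
      refine Or.inl ⟨j, hij, ?_, fun m him hmj => ?_⟩
      · rwa [← hagree i (by omega), ← hagree j hjd.ne]
      · rw [← hagree m (by omega)]; exact hzero m him hmj
    · obtain rfl : i = e := by_contra fun hne => hqe (by
        rw [← hagree e hed.ne]; exact hzero e (by omega) hed)
      exact Or.inr ⟨rfl, by rwa [hagree e hed.ne] at hneg⟩
  · rintro (⟨j, hij, hneg, hzero⟩ | ⟨rfl, hneg⟩)
    · have hje : j ≤ e := le_natDegree_of_ne_zero fun h => by simp [h] at hneg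
      refine ⟨j, hij, ?_, fun m him hmj => ?_⟩
      · rwa [hagree i (by omega), hagree j (by omega)]
      · rw [hagree m (by omega)]; exact hzero m him hmj
    · refine ⟨d, hed, ?_, fun m hem hmd => hgap m hem hmd.ne⟩
      rwa [hagree e hed.ne]

end SignChangeIndices

theorem realSignChanges_eq_ncard (p : ℝ[X]) :
    realSignChanges p = (signChangeIndices p).ncard := by
  rw [realSignChanges, Nat.card_coe_set_eq]
  congr 1
  ext i
  refine ⟨fun ⟨k, hk, hneg, hzero⟩ => ⟨i + k, by omega, hneg, hzero⟩,
    fun ⟨j, hij, hneg, hzero⟩ => ⟨j - i, by omega, ?_, ?_⟩⟩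
  · rwa [Nat.add_sub_cancel' hij.le]
  · rwa [Nat.add_sub_cancel' hij.le]

theorem realSignChanges_zero : realSignChanges 0 = 0 := by
  simp [realSignChanges_eq_ncard, signChangeIndices_eq_empty_of_eraseLead_eq_zero eraseLead_zero]

theorem realSignChanges_eq_eraseLead_add (p : ℝ[X]) :
    realSignChanges p = realSignChanges p.eraseLead +
      if p.eraseLead.leadingCoeff * p.leadingCoeff < 0 then 1 else 0 := by
  rw [realSignChanges_eq_ncard, realSignChanges_eq_ncard]
  by_cases h : p.eraseLead = 0
  · simp [h, signChangeIndices_eq_empty_of_eraseLead_eq_zero h,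
      signChangeIndices_eq_empty_of_eraseLead_eq_zero eraseLead_zero]
  have hnotMem : p.eraseLead.natDegree ∉ signChangeIndices p.eraseLead :=
    fun hmem => (lt_natDegree_of_mem_signChangeIndices hmem).false
  split_ifs with hneg
  · rw [← Set.ncard_insert_of_notMem hnotMem (signChangeIndices_finite _)]
    congr 1
    ext i
    simp [mem_signChangeIndices_iff_of_eraseLead_ne_zero h, hneg, or_comm]
  · congr 1
    ext i
    simp [mem_signChangeIndices_iff_of_eraseLead_ne_zero h, hneg]

theorem realSignChanges_eq_signVariations (p : ℝ[X]) : realSignChanges p = p.signVariations := by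
  induction hn : p.support.card using Nat.strong_induction_on generalizing p with
  | _ n ih =>
  rcases eq_or_ne p 0 with rfl | hp
  · simp [realSignChanges_zero]
  rw [realSignChanges_eq_eraseLead_add, signVariations_eq_eraseLead_add_ite hp,
    ih _ (hn ▸ eraseLead_support_card_lt hp) _ rfl, mul_comm]
  simp only [sign_eq_neg_sign_iff_mul_neg (leadingCoeff_ne_zero.mpr hp)]

theorem card_roots_filter_pos_le_realSignChanges (p : ℝ[X]) :
    (p.roots.filter (0 < ·)).card ≤ realSignChanges p := by
  rw [realSignChanges_eq_signVariations, ← Multiset.countP_eq_card_filter]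
  exact roots_countP_pos_le_signVariations p

theorem realSignChanges_add_realSignChanges_comp_neg_X_le (p : ℝ[X]) :
    realSignChanges p + realSignChanges (p.comp (-X)) + p.natTrailingDegree ≤ p.natDegree := by
  induction hn : p.support.card using Nat.strong_induction_on generalizing p with
  | _ n ih =>
  rcases eq_or_ne p 0 with rfl | hp
  · simp [realSignChanges_zero]
  have ih' := ih _ (hn ▸ eraseLead_support_card_lt hp) p.eraseLead rfl
  rw [realSignChanges_eq_eraseLead_add p, realSignChanges_eq_eraseLead_add (p.comp (-X)),
    eraseLead_comp_neg_X, comp_neg_X_leadingCoeff_eq, comp_neg_X_leadingCoeff_eq]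
  rcases eq_or_ne p.eraseLead 0 with h | h
  · simp [h, realSignChanges_zero, natTrailingDegree_le_natDegree]
  have hed := (eraseLead_natDegree_lt_or_eraseLead_eq_zero p).resolve_right h
  have htrail := natTrailingDegree_le_natTrailingDegree_eraseLead h
  have hjump : ∀ {e d : ℕ} (a b : ℝ), e < d → (if a * b < 0 then 1 else 0) +
      (if (-1) ^ e * a * ((-1) ^ d * b) < 0 then 1 else 0) ≤ d - e := by
    intro e d a b hed
    obtain ⟨_ | k, rfl⟩ := Nat.exists_eq_add_of_lt hed
    · have : (-1 : ℝ) ^ e * a * ((-1) ^ (e + 0 + 1) * b) = -(a * b) := by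
        ring_nf; simp
      split_ifs <;> first | omega | linarith
    · split_ifs <;> omega
  have := hjump p.eraseLead.leadingCoeff p.leadingCoeff hed
  omega

end Polynomial

theorem descartes_rule_of_signs_general (p : Polynomial ℝ) :
    (p.roots.filter (fun a => 0 < a)).card ≤ realSignChanges p ∧
    (p.Splits →
      (p.roots.filter (fun a => 0 < a)).card = realSignChanges p) := by
  refine ⟨card_roots_filter_pos_le_realSignChanges p, fun hsplit => ?_⟩
  have hroots := p.roots.card_filter_pos_add_card_filter_neg_add_count_zero
  rw [count_roots, rootMultiplicity_eq_natTrailingDegree', card_roots_filter_neg_eq_comp_neg_X,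
    ← hsplit.natDegree_eq_card_roots] at hroots
  have hneg := card_roots_filter_pos_le_realSignChanges (p.comp (-X))
  have hsum := realSignChanges_add_realSignChanges_comp_neg_X_le p
  have hpos := card_roots_filter_pos_le_realSignChanges p
  omega

/-- Descartes' rule of signs: the number of positive real roots of a nonzero real
polynomial `p`, counted with multiplicity, is at most the number of sign changes in its
coefficient sequence, with equality if `p` splits into linear factors over `ℝ`. -/
theorem descartes_rule_of_signs (p : Polynomial ℝ) (hp : p ≠ 0) :
    (p.roots.filter (fun a => 0 < a)).card ≤ realSignChanges p ∧
    (p.Splits →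
      (p.roots.filter (fun a => 0 < a)).card = realSignChanges p) :=
  descartes_rule_of_signs_general p
end

section
/- Newton's polygon rule: Let K be a field with valuation v : K → ℝ ∪ {∞}, and let p = Σ_{i=0}^n c_i T^i ∈ K[T] with c_0 ≠ 0 and c_n ≠ 0. For s ∈ ℝ, the number of roots a ∈ K of p with v(a) = s, counted with multiplicity, is at most ν_s(p̄), the length of the projection to the x-axis of the segment of slope -s of the Newton polygon of p (or 0 if no such segment exists). Equality holds if p splits into linear factors over K. -/
open Polynomial

open Classical in
/-- `nuSlope v p s` is `ν_s(p̄)`: the horizontal length of the segment of slope `-s` of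
the Newton polygon of `p` (and `0` if there is no such segment).  Concretely, it is
`max I - min I` where `I` is the set of indices `i` at which `min_j (v(c_j) + j·s)` is
attained. -/
noncomputable def nuSlope {K : Type*} [Field K] (v : K → WithTop ℝ) (p : Polynomial K)
    (s : ℝ) : ℕ :=
  let f : ℕ → WithTop ℝ := fun i => v (p.coeff i) + (((i : ℝ) * s : ℝ) : WithTop ℝ)
  let m := (Finset.range (p.natDegree + 1)).inf f
  let I := (Finset.range (p.natDegree + 1)).filter (fun i => f i = m)
  (WithBot.unbotD 0 I.max) - (WithTop.untopD 0 I.min)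

/-!
For a fixed slope `-s`, the lowest line of that slope meeting the points `(i, v(cᵢ))` touches
them at indices ranging from `B` to `A`, and `ν_s(p̄) = A - B`. For a product `p * q` the extreme
terms `c_B d_{B'}` and `c_A d_{A'}` of the convolution sums have strictly smaller weighted
valuation than all other terms on their antidiagonals, so the ultrametric inequality is an equality
there: the endpoints add, and `ν_s` is additive on nonzero polynomials. Since `ν_s(X - a)` is `1`
when `v(a) = s` and `0` otherwise, and `ν_s` of a constant is `0`, writing
`p = (∏_{roots} (X - a)) * q` gives the inequality, with `q` constant when `p` splits.
-/

open Finset.HasAntidiagonal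

namespace AddValuation

variable {R Γ₀ : Type*} [Ring R] [LinearOrderedAddCommMonoidWithTop Γ₀] (w : AddValuation R Γ₀)

theorem exists_map_le_map_sum {ι : Type*} {S : Finset ι} (hS : S.Nonempty) (t : ι → R) :
    ∃ x ∈ S, w (t x) ≤ w (∑ x ∈ S, t x) := by
  obtain ⟨x₀, hx₀, hmin⟩ := S.exists_min_image (fun x => w (t x)) hS
  exact ⟨x₀, hx₀, w.map_le_sum hmin⟩

theorem map_sum_eq_of_lt {ι : Type*} [DecidableEq ι] {S : Finset ι} {t : ι → R} {x₀ : ι}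
    (hx₀ : x₀ ∈ S) (hne : w (t x₀) ≠ ⊤) (hlt : ∀ x ∈ S, x ≠ x₀ → w (t x₀) < w (t x)) :
    w (∑ x ∈ S, t x) = w (t x₀) := by
  rw [← Finset.add_sum_erase S t hx₀]
  exact w.map_add_eq_of_lt_left <| w.map_lt_sum hne fun x hx => hlt x (Finset.mem_of_mem_erase hx)
    (Finset.ne_of_mem_erase hx)

end AddValuation

section NewtonSegment

variable {R : Type*} [Ring R]

/-- The intercept on the vertical axis of the line of slope `-s` through `(i, v(cᵢ))`. -/
def weightedVal (v : R → WithTop ℝ) (p : R[X]) (s : ℝ) (i : ℕ) : WithTop ℝ :=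
  v (p.coeff i) + ((i * s : ℝ) : WithTop ℝ)

/-- The line of slope `-s` and intercept `m` supports the Newton polygon of `p`, and the
points of the polygon on it have abscissae `B` and `A` at the ends. -/
structure IsNewtonSegment (v : R → WithTop ℝ) (p : R[X]) (s : ℝ) (m : WithTop ℝ) (B A : ℕ) :
    Prop where
  le_weightedVal : ∀ i, m ≤ weightedVal v p s i
  weightedVal_left : weightedVal v p s B = m
  weightedVal_right : weightedVal v p s A = m
  lt_weightedVal_of_lt : ∀ i < B, m < weightedVal v p s i
  lt_weightedVal_of_gt : ∀ i, A < i → m < weightedVal v p s i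

theorem IsNewtonSegment.ne_top {v : R → WithTop ℝ} {p : R[X]} {s : ℝ} {m : WithTop ℝ} {B A : ℕ}
    (h : IsNewtonSegment v p s m B A) : m ≠ ⊤ :=
  (h.lt_weightedVal_of_gt (A + 1) A.lt_succ_self).ne_top

theorem IsNewtonSegment.left_le_right {v : R → WithTop ℝ} {p : R[X]} {s : ℝ} {m : WithTop ℝ}
    {B A : ℕ} (h : IsNewtonSegment v p s m B A) : B ≤ A := by
  by_contra! hAB
  exact (h.lt_weightedVal_of_gt B hAB).ne' h.weightedVal_left

variable (w : AddValuation R (WithTop ℝ)) (p q : R[X]) (s : ℝ)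

theorem weightedVal_add_weightedVal {k : ℕ} {x : ℕ × ℕ} (hx : x ∈ antidiagonal k) :
    weightedVal w p s x.1 + weightedVal w q s x.2
      = w (p.coeff x.1 * q.coeff x.2) + ((k * s : ℝ) : WithTop ℝ) := by
  rw [mem_antidiagonal] at hx
  simp only [weightedVal, AddValuation.map_mul, ← hx, Nat.cast_add, add_mul, WithTop.coe_add]
  ac_rfl

theorem weightedVal_mul (k : ℕ) :
    weightedVal w (p * q) s k
      = w (∑ x ∈ antidiagonal k, p.coeff x.1 * q.coeff x.2) + ((k * s : ℝ) : WithTop ℝ) := by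
  rw [weightedVal, coeff_mul]

theorem exists_weightedVal_add_le_weightedVal_mul (k : ℕ) : ∃ x ∈ antidiagonal k,
    weightedVal w p s x.1 + weightedVal w q s x.2 ≤ weightedVal w (p * q) s k := by
  obtain ⟨x, hx, hle⟩ := w.exists_map_le_map_sum (S := antidiagonal k) ⟨(0, k), by simp⟩
    fun x => p.coeff x.1 * q.coeff x.2
  exact ⟨x, hx, by rw [weightedVal_add_weightedVal w p q s hx, weightedVal_mul]; gcongr⟩

variable {w p q s}

theorem weightedVal_mul_eq_of_lt {k : ℕ} {x₀ : ℕ × ℕ} (hx₀ : x₀ ∈ antidiagonal k)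
    (hne : weightedVal w p s x₀.1 + weightedVal w q s x₀.2 ≠ ⊤)
    (hlt : ∀ x ∈ antidiagonal k, x ≠ x₀ → weightedVal w p s x₀.1 + weightedVal w q s x₀.2
      < weightedVal w p s x.1 + weightedVal w q s x.2) :
    weightedVal w (p * q) s k = weightedVal w p s x₀.1 + weightedVal w q s x₀.2 := by
  rw [weightedVal_add_weightedVal w p q s hx₀] at hne ⊢
  rw [weightedVal_mul, w.map_sum_eq_of_lt hx₀ (WithTop.add_ne_top.mp hne).1]
  intro x hx hxx₀
  have := hlt x hx hxx₀
  rw [weightedVal_add_weightedVal w p q s hx₀, weightedVal_add_weightedVal w p q s hx] at this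
  exact lt_of_add_lt_add_right this

theorem IsNewtonSegment.mul {m m' : WithTop ℝ} {B A B' A' : ℕ}
    (hp : IsNewtonSegment w p s m B A) (hq : IsNewtonSegment w q s m' B' A') :
    IsNewtonSegment w (p * q) s (m + m') (B + B') (A + A') := by
  have hlt : ∀ x : ℕ × ℕ, m < weightedVal w p s x.1 ∨ m' < weightedVal w q s x.2 →
      m + m' < weightedVal w p s x.1 + weightedVal w q s x.2 := by
    rintro x (h | h)
    · exact (WithTop.add_lt_add_right hq.ne_top h).trans_le (by gcongr; exact hq.le_weightedVal _)
    · exact (WithTop.add_lt_add_left hp.ne_top h).trans_le (by gcongr; exact hp.le_weightedVal _)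
  have hlt_left : ∀ x : ℕ × ℕ, x.1 < B ∨ x.2 < B' →
      m + m' < weightedVal w p s x.1 + weightedVal w q s x.2 := fun x hx =>
    hlt x (hx.imp (hp.lt_weightedVal_of_lt _) (hq.lt_weightedVal_of_lt _))
  have hlt_right : ∀ x : ℕ × ℕ, A < x.1 ∨ A' < x.2 →
      m + m' < weightedVal w p s x.1 + weightedVal w q s x.2 := fun x hx =>
    hlt x (hx.imp (hp.lt_weightedVal_of_gt _) (hq.lt_weightedVal_of_gt _))
  have hne : m + m' ≠ ⊤ := WithTop.add_ne_top.mpr ⟨hp.ne_top, hq.ne_top⟩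
  refine ⟨fun k => ?_, ?_, ?_, fun k hk => ?_, fun k hk => ?_⟩
  · obtain ⟨x, -, hx⟩ := exists_weightedVal_add_le_weightedVal_mul w p q s k
    exact (add_le_add (hp.le_weightedVal _) (hq.le_weightedVal _)).trans hx
  · have h₀ := congrArg₂ (· + ·) hp.weightedVal_left hq.weightedVal_left
    refine (weightedVal_mul_eq_of_lt (x₀ := (B, B')) (by simp) (h₀ ▸ hne) ?_).trans h₀
    intro x hx hxB
    rw [mem_antidiagonal] at hx
    have : x.1 ≠ B := fun h => hxB (Prod.ext h (by simp only at h ⊢; omega))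
    exact h₀ ▸ hlt_left x (by omega)
  · have h₀ := congrArg₂ (· + ·) hp.weightedVal_right hq.weightedVal_right
    refine (weightedVal_mul_eq_of_lt (x₀ := (A, A')) (by simp) (h₀ ▸ hne) ?_).trans h₀
    intro x hx hxA
    rw [mem_antidiagonal] at hx
    have : x.1 ≠ A := fun h => hxA (Prod.ext h (by simp only at h ⊢; omega))
    exact h₀ ▸ hlt_right x (by omega)
  · obtain ⟨x, hx, hle⟩ := exists_weightedVal_add_le_weightedVal_mul w p q s k
    rw [mem_antidiagonal] at hx
    exact (hlt_left x (by omega)).trans_le hle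
  · obtain ⟨x, hx, hle⟩ := exists_weightedVal_add_le_weightedVal_mul w p q s k
    rw [mem_antidiagonal] at hx
    exact (hlt_right x (by omega)).trans_le hle

end NewtonSegment

section Field

variable {K : Type*} [Field K] {w : AddValuation K (WithTop ℝ)} {p q : K[X]} {s : ℝ}

theorem nuSlope_eq_weightedVal (v : K → WithTop ℝ) (p : K[X]) (s : ℝ) :
    nuSlope v p s =
      let I := (Finset.range (p.natDegree + 1)).filter fun i =>
        weightedVal v p s i = (Finset.range (p.natDegree + 1)).inf (weightedVal v p s)
      WithBot.unbotD 0 I.max - WithTop.untopD 0 I.min := rfl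

theorem IsNewtonSegment.nuSlope_eq {m : WithTop ℝ} {B A : ℕ} (h : IsNewtonSegment w p s m B A) :
    nuSlope w p s = A - B := by
  have hA : A ≤ p.natDegree := by
    by_contra! hA
    have := h.weightedVal_right
    rw [weightedVal, coeff_eq_zero_of_natDegree_lt hA, w.map_zero, top_add] at this
    exact h.ne_top this.symm
  have hinf : (Finset.range (p.natDegree + 1)).inf (weightedVal w p s) = m :=
    le_antisymm (h.weightedVal_right ▸ Finset.inf_le (by simp; omega))
      (Finset.le_inf fun i _ => h.le_weightedVal i)
  rw [nuSlope_eq_weightedVal, hinf]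
  dsimp only
  set I := (Finset.range (p.natDegree + 1)).filter fun i => weightedVal w p s i = m
  have hB : B ≤ p.natDegree := h.left_le_right.trans hA
  have hmax : I.max = A := by
    refine le_antisymm (Finset.max_le fun i hi => WithBot.coe_le_coe.2 ?_)
      (Finset.le_max (a := A) ?_)
    · exact not_lt.1 fun hlt => (h.lt_weightedVal_of_gt i hlt).ne' (Finset.mem_filter.1 hi).2
    · exact Finset.mem_filter.2 ⟨Finset.mem_range.2 (by omega), h.weightedVal_right⟩
  have hmin : I.min = B := by
    refine le_antisymm (Finset.min_le (a := B) ?_)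
      (Finset.le_min fun i hi => WithTop.coe_le_coe.2 ?_)
    · exact Finset.mem_filter.2 ⟨Finset.mem_range.2 (by omega), h.weightedVal_left⟩
    · exact not_lt.1 fun hlt => (h.lt_weightedVal_of_lt i hlt).ne' (Finset.mem_filter.1 hi).2
  rw [hmax, hmin]
  rfl

theorem weightedVal_eq_top_of_natDegree_lt {i : ℕ} (hi : p.natDegree < i) :
    weightedVal w p s i = ⊤ := by
  rw [weightedVal, coeff_eq_zero_of_natDegree_lt hi, w.map_zero, top_add]

theorem exists_isNewtonSegment (w : AddValuation K (WithTop ℝ)) (hp : p ≠ 0) (s : ℝ) :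
    ∃ m B A, IsNewtonSegment w p s m B A := by
  obtain ⟨i₀, hi₀, hmin⟩ := (Finset.range (p.natDegree + 1)).exists_min_image
    (weightedVal w p s) (Finset.nonempty_range_iff.2 p.natDegree.succ_ne_zero)
  rw [Finset.mem_range, Nat.lt_succ_iff] at hi₀
  set m := weightedVal w p s i₀
  have hle : ∀ i, m ≤ weightedVal w p s i := fun i => by
    rcases le_or_gt i p.natDegree with hi | hi
    · exact hmin i (Finset.mem_range.2 (Nat.lt_succ_of_le hi))
    · exact (weightedVal_eq_top_of_natDegree_lt hi).symm ▸ le_top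
  have hne : m ≠ ⊤ := fun htop => by
    have := hle p.natDegree
    rw [htop, top_le_iff, weightedVal, WithTop.add_eq_top, w.top_iff] at this
    exact this.elim (fun h => hp (leadingCoeff_eq_zero.1 h)) WithTop.coe_ne_top
  have hex : ∃ i, weightedVal w p s i = m := ⟨i₀, rfl⟩
  refine ⟨m, Nat.find hex, Nat.findGreatest (weightedVal w p s · = m) p.natDegree,
    ⟨hle, Nat.find_spec hex, Nat.findGreatest_spec (P := (weightedVal w p s · = m)) hi₀ rfl,
      fun i hi => (hle i).lt_of_ne' (Nat.find_min hex hi), fun i hi => ?_⟩⟩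
  rcases le_or_gt i p.natDegree with hid | hid
  · exact (hle i).lt_of_ne' (Nat.findGreatest_is_greatest hi hid)
  · exact (weightedVal_eq_top_of_natDegree_lt hid).symm ▸ hne.lt_top

theorem nuSlope_mul (hp : p ≠ 0) (hq : q ≠ 0) :
    nuSlope w (p * q) s = nuSlope w p s + nuSlope w q s := by
  obtain ⟨m, B, A, hpseg⟩ := exists_isNewtonSegment w hp s
  obtain ⟨m', B', A', hqseg⟩ := exists_isNewtonSegment w hq s
  rw [(hpseg.mul hqseg).nuSlope_eq, hpseg.nuSlope_eq, hqseg.nuSlope_eq]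
  have := hpseg.left_le_right
  have := hqseg.left_le_right
  omega

theorem nuSlope_C {c : K} (hc : c ≠ 0) : nuSlope w (C c) s = 0 := by
  have htop : ∀ i, 0 < i → weightedVal w (C c) s i = ⊤ := fun i hi =>
    weightedVal_eq_top_of_natDegree_lt (natDegree_C c ▸ hi)
  have h₀ : weightedVal w (C c) s 0 = w c := by simp [weightedVal]
  have hseg : IsNewtonSegment w (C c) s (w c) 0 0 :=
    ⟨fun i => i.eq_zero_or_pos.elim (fun h => h ▸ h₀.ge) (fun h => htop i h ▸ le_top), h₀, h₀,
      fun i hi => absurd hi i.not_lt_zero, fun i hi => htop i hi ▸ (w.ne_top_iff.2 hc).lt_top⟩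
  simpa using hseg.nuSlope_eq

theorem weightedVal_X_sub_C (a : K) (i : ℕ) : weightedVal w (X - C a) s i =
    if i = 0 then w a else if i = 1 then (s : WithTop ℝ) else ⊤ := by
  rcases i with _ | _ | i <;> simp [weightedVal, coeff_X]

theorem nuSlope_X_sub_C (a : K) : nuSlope w (X - C a) s = if w a = s then 1 else 0 := by
  rcases lt_trichotomy (w a) s with hlt | heq | hgt
  · have h : IsNewtonSegment w (X - C a) s (w a) 0 0 := by
      refine ⟨fun i => ?_, ?_, ?_, fun i hi => ?_, fun i hi => ?_⟩ <;>
        simp only [weightedVal_X_sub_C] <;> split_ifs <;> simp_all [hlt.le, hlt.ne_top.lt_top]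
    rw [h.nuSlope_eq, if_neg hlt.ne]
  · have h : IsNewtonSegment w (X - C a) s s 0 1 := by
      refine ⟨fun i => ?_, ?_, ?_, fun i hi => ?_, fun i hi => ?_⟩ <;>
        simp only [weightedVal_X_sub_C] <;> split_ifs <;> simp_all
    rw [h.nuSlope_eq, if_pos heq]
  · have h : IsNewtonSegment w (X - C a) s s 1 1 := by
      refine ⟨fun i => ?_, ?_, ?_, fun i hi => ?_, fun i hi => ?_⟩ <;>
        simp only [weightedVal_X_sub_C] <;> split_ifs <;> simp_all [hgt.le]
    rw [h.nuSlope_eq, if_neg hgt.ne']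

open Classical in
theorem nuSlope_multiset_prod_X_sub_C (t : Multiset K) :
    nuSlope w (t.map (X - C ·)).prod s = (t.filter (w · = s)).card := by
  induction t using Multiset.induction_on with
  | empty => simpa using nuSlope_C (w := w) (s := s) one_ne_zero
  | cons a t ih =>
    rw [Multiset.map_cons, Multiset.prod_cons, nuSlope_mul (X_sub_C_ne_zero a)
      (monic_multisetProd_X_sub_C t).ne_zero, ih,
      nuSlope_X_sub_C, Multiset.filter_cons]
    split_ifs <;> simp [add_comm]

end Field

open Classical in
theorem newton_polygon_rule_general {K : Type*} [Field K] (v : K → WithTop ℝ)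
    (hv0 : ∀ a : K, v a = ⊤ ↔ a = 0)
    (hvmul : ∀ a b : K, v (a * b) = v a + v b)
    (hvadd : ∀ a b : K, min (v a) (v b) ≤ v (a + b))
    (p : Polynomial K) (hp : p ≠ 0) (s : ℝ) :
    (p.roots.filter (fun a => v a = (s : WithTop ℝ))).card ≤ nuSlope v p s ∧
    ((p.map (RingHom.id K)).Splits →
      (p.roots.filter (fun a => v a = (s : WithTop ℝ))).card = nuSlope v p s) := by
  have hv1 : v 1 = 0 := by
    have h := hvmul 1 1
    rw [mul_one] at h
    lift v 1 to ℝ using ((hv0 1).not.2 one_ne_zero) with r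
    norm_cast at h ⊢
    linarith
  let w := AddValuation.of v ((hv0 0).2 rfl) hv1 hvadd hvmul
  change (p.roots.filter (w · = s)).card ≤ nuSlope w p s ∧
    ((p.map (RingHom.id K)).Splits → (p.roots.filter (w · = s)).card = nuSlope w p s)
  have hprod := (monic_multisetProd_X_sub_C p.roots).ne_zero
  constructor
  · obtain ⟨q, hq⟩ := prod_multiset_X_sub_C_dvd p
    calc (p.roots.filter (w · = s)).card ≤ (p.roots.filter (w · = s)).card + nuSlope w q s :=
          Nat.le_add_right _ _
      _ = nuSlope w p s := by
        rw [← nuSlope_multiset_prod_X_sub_C, ← nuSlope_mul hprod (right_ne_zero_of_mul (hq ▸ hp)),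
          ← hq]
  · intro hsplit
    rw [map_id] at hsplit
    have hlc := leadingCoeff_ne_zero.2 hp
    conv_rhs => rw [hsplit.eq_prod_roots]
    rw [nuSlope_mul (C_ne_zero.2 hlc) hprod, nuSlope_C hlc, zero_add, nuSlope_multiset_prod_X_sub_C]

open Classical in
/-- Newton's polygon rule: if `v` is a valuation on a field `K` and
`p = Σ_{i=0}^n c_i T^i ∈ K[T]` with `c_0 ≠ 0` and `p ≠ 0`, then for every `s ∈ ℝ` the
number of roots `a ∈ K` of `p` with `v(a) = s`, counted with multiplicity, is at most
`ν_s(p̄)`, with equality if `p` splits into linear factors over `K`. -/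
theorem newton_polygon_rule {K : Type*} [Field K] (v : K → WithTop ℝ)
    (hv0 : ∀ a : K, v a = ⊤ ↔ a = 0)
    (hvmul : ∀ a b : K, v (a * b) = v a + v b)
    (hvadd : ∀ a b : K, min (v a) (v b) ≤ v (a + b))
    (p : Polynomial K) (hp : p ≠ 0) (hc0 : p.coeff 0 ≠ 0) (s : ℝ) :
    (p.roots.filter (fun a => v a = (s : WithTop ℝ))).card ≤ nuSlope v p s ∧
    ((p.map (RingHom.id K)).Splits →
      (p.roots.filter (fun a => v a = (s : WithTop ℝ))).card = nuSlope v p s) :=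
  newton_polygon_rule_general v hv0 hvmul hvadd p hp s
end

section
/- Let p be a monic polynomial of degree n over the tropical hyperfield T and a_1,…,a_n ∈ T. Then p ∈ ∏(T + a_i) if and only if the associated tropical polynomial functions agree: for all b ∈ ℝ, min_{0≤i≤n}(c_i + i·b) = Σ_{i=1}^n min(b, a_i), where p = Σ c_i T^i and arithmetic on the right is ordinary (extended) real arithmetic. -/
/-- Hyperaddition of the tropical hyperfield `T = ℝ ∪ {∞}`:
`a ⊞ b = {min a b}` if `a ≠ b`, and `a ⊞ a = {c : a ≤ c}`.  Tropical multiplication is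
addition of extended reals. -/
noncomputable def thadd (a b : WithTop ℝ) : Set (WithTop ℝ) :=
  if a = b then {c | a ≤ c} else {min a b}

/-- The hypersum of a list of elements of the tropical hyperfield, defined recursively. -/
noncomputable def thsum : List (WithTop ℝ) → Set (WithTop ℝ)
  | [] => {⊤}
  | [x] => {x}
  | x :: y :: l => ⋃ b ∈ thsum (y :: l), thadd b x

/-- `TFactors n c a` expresses `p ∈ ∏_{e=0}^{n-1} (T + a_e)` for the monic polynomial
`p = Σ_{i=0}^n c_i T^i` over the tropical hyperfield: for each `i = 1, …, n`,
`c_{n-i}` lies in the hypersum, over all `i`-element subsets `S` of `{0, …, n-1}`, of the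
tropical products `∑_{e ∈ S} a_e`. -/
noncomputable def TFactors (n : ℕ) (c : ℕ → WithTop ℝ) (a : ℕ → WithTop ℝ) : Prop :=
  ∀ i, 1 ≤ i → i ≤ n →
    c (n - i) ∈ thsum ((((Finset.range n).powersetCard i).toList).map
      (fun S => ∑ e ∈ S, a e))

/-!
Let `e_i = min_{|S| = i} ∑_{e ∈ S} a_e` (tropical elementary symmetric functions),
`F(b) = min_j (c_j + j b)` and `G(b) = ∑_e min(b, a_e)`. Unfolding the tropical hypersum,
`p ∈ ∏ (T + a_e)` says: `c_{n-i} ≥ e_i` for every `i`, with equality whenever `e_i` is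
attained by a single subset.

`G(b)` is the minimum over all subsets `S` of `∑_{e ∈ S} a_e + (n - |S|) b`, and `S` attains it
iff `{a < b} ⊆ S ⊆ {a ≤ b}`. Thus `G(b) ≤ e_i + (n - i) b` for all `b`, with equality at
`b = max_{e ∈ S} a_e` for any minimiser `S` of `e_i` (and `G(b) - (n - i) b` is unbounded when
`e_i = ∞`), so `G ≤ F` is equivalent to the inequalities `c_{n-i} ≥ e_i`. At a given `b`, the
set `{a < b}` is the only minimiser among subsets of its size, so its coefficient is exact and gives
`F(b) ≤ G(b)`. Conversely, if `e_i` has a single minimiser `S`, choose `b` strictly between the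
values on `S` and those off `S`: then `S` is the only subset attaining `G(b)`, so `F(b) = G(b)`
can only be attained at `c_{n-i}`, forcing `c_{n-i} = e_i`.
-/

open Finset

lemma mem_thadd {x y z : WithTop ℝ} :
    z ∈ thadd x y ↔ min x y ≤ z ∧ (z = min x y ∨ x = y) := by
  unfold thadd
  split_ifs with h
  · subst h; simp
  · simp only [Set.mem_singleton_iff, h, or_false]
    exact ⟨fun hz => ⟨hz.ge, hz⟩, And.right⟩

lemma mem_thsum_iff (l : List (WithTop ℝ)) (z : WithTop ℝ) :
    z ∈ thsum l ↔
      l.foldr min ⊤ ≤ z ∧ (z = l.foldr min ⊤ ∨ 2 ≤ l.count (l.foldr min ⊤)) := by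
  induction l using thsum.induct generalizing z with
  | case1 => simp [thsum, eq_comm]
  | case2 x => simp [thsum, eq_comm]; exact le_of_eq
  | case3 x y l ih =>
    set L := y :: l
    set m := L.foldr min ⊤
    have hm_mem : m ∈ L :=
      List.minimum_mem (List.foldr_min_of_ne_nil (List.cons_ne_nil y l)).symm
    have hm_le : ∀ w ∈ L, m ≤ w := fun w hw => List.min_le_of_le hw le_rfl
    have hcount : 1 ≤ L.count m := List.one_le_count_iff.2 hm_mem
    rw [show thsum (x :: L) = ⋃ b ∈ thsum L, thadd b x from rfl,
      show (x :: L).foldr min ⊤ = min x m from rfl]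
    simp only [Set.mem_iUnion, exists_prop, ih, mem_thadd, List.count_cons, beq_iff_eq]
    rcases lt_trichotomy x m with hxm | rfl | hmx
    · have : L.count x = 0 := List.count_eq_zero.2 fun hx => (hm_le x hx).not_gt hxm
      simp only [min_eq_left hxm.le, this, if_true]
      constructor
      · rintro ⟨b, ⟨hmb, -⟩, -, hz | rfl⟩
        · grind
        · exact absurd hmb hxm.not_ge
      · rintro ⟨-, hz⟩
        exact ⟨m, ⟨le_rfl, Or.inl rfl⟩, by grind⟩
    · simp only [min_self, if_true]
      constructor
      · rintro ⟨b, ⟨hmb, -⟩, hbz, -⟩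
        exact ⟨(min_eq_right hmb).symm.trans_le hbz, by omega⟩
      · exact fun ⟨hxz, _⟩ => ⟨m, ⟨le_rfl, Or.inl rfl⟩, by simpa using hxz⟩
    · simp only [min_eq_right hmx.le, hmx.ne', if_false, add_zero]
      constructor
      · rintro ⟨b, ⟨hmb, hb⟩, hbz, hz⟩
        exact ⟨(le_min hmb hmx.le).trans hbz, by grind⟩
      · rintro ⟨hmz, rfl | h2⟩
        · exact ⟨m, ⟨le_rfl, Or.inl rfl⟩, by grind⟩
        · rcases le_or_gt x z with hxz | hzx
          · exact ⟨x, ⟨hmx.le, Or.inr h2⟩, by grind⟩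
          · exact ⟨z, ⟨hmz, Or.inr h2⟩, by grind⟩

lemma foldr_min_map_toList {σ : Type*} (s : Finset σ) (f : σ → WithTop ℝ) :
    (s.toList.map f).foldr min ⊤ = s.inf f := by
  rw [Finset.inf_def, ← Finset.coe_toList, Multiset.map_coe, Multiset.inf_coe]

lemma count_map_toList {σ : Type*} (s : Finset σ) (f : σ → WithTop ℝ) (y : WithTop ℝ) :
    (s.toList.map f).count y = #{x ∈ s | f x = y} := by
  classical
  rw [← Multiset.coe_count, ← Multiset.map_coe, Finset.coe_toList, Multiset.count_map]
  simp [Finset.card_def, Finset.filter_val, eq_comm]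

lemma mem_thsum_map_toList {σ : Type*} (s : Finset σ) (f : σ → WithTop ℝ) (y : WithTop ℝ) :
    y ∈ thsum (s.toList.map f) ↔
      s.inf f ≤ y ∧ (y = s.inf f ∨ 1 < #{x ∈ s | f x = s.inf f}) := by
  rw [mem_thsum_iff, foldr_min_map_toList, count_map_toList]
  rfl

lemma ite_le_min_iff {α : Type*} [LinearOrder α] {p : Prop} [Decidable p] {x b : α} :
    (if p then x else b) ≤ min b x ↔ (x < b → p) ∧ (p → x ≤ b) := by
  split_ifs with hp <;> simp [hp]

lemma forall_le_of_sum_le_sum {ι M : Type*} [DecidableEq ι] [AddCommMonoid M] [LinearOrder M]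
    [IsOrderedCancelAddMonoid M] {s : Finset ι} {f g : ι → WithTop M}
    (hf : ∑ x ∈ s, f x ≠ ⊤) (hfg : ∀ x ∈ s, f x ≤ g x)
    (h : ∑ x ∈ s, g x ≤ ∑ x ∈ s, f x) : ∀ x ∈ s, g x ≤ f x := by
  intro x hx
  by_contra hlt
  have hrest : ∑ y ∈ s.erase x, f y ≠ ⊤ :=
    WithTop.sum_ne_top.2 fun y hy => WithTop.sum_ne_top.1 hf y (mem_of_mem_erase hy)
  refine h.not_gt ?_
  rw [← add_sum_erase s f hx, ← add_sum_erase s g hx]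
  exact WithTop.add_lt_add_of_lt_of_le hrest (not_le.1 hlt)
    (sum_le_sum fun y hy => hfg y (mem_of_mem_erase hy))

lemma sum_ite_le_sum_min_iff {ι : Type*} [DecidableEq ι] {s S : Finset ι}
    {f : ι → WithTop ℝ} {b : ℝ} :
    ∑ x ∈ s, (if x ∈ S then f x else (b : WithTop ℝ)) ≤
        ∑ x ∈ s, min (b : WithTop ℝ) (f x) ↔
      ∀ x ∈ s, (f x < b → x ∈ S) ∧ (x ∈ S → f x ≤ b) := by
  refine ⟨fun h x hx => ite_le_min_iff.1 ?_,
    fun h => sum_le_sum fun x hx => ite_le_min_iff.2 (h x hx)⟩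
  refine forall_le_of_sum_le_sum ?_ (fun y _ => ?_) h x hx
  · exact WithTop.sum_ne_top.2 fun y _ =>
      ne_top_of_le_ne_top WithTop.coe_ne_top (min_le_left _ _)
  · split_ifs <;> simp

lemma exists_coe_between {ι : Type*} {s t : Finset ι} {f : ι → WithTop ℝ} (hs : s.Nonempty)
    (hfin : ∀ x ∈ s, f x ≠ ⊤) (h : ∀ x ∈ s, ∀ y ∈ t, f x < f y) :
    ∃ b : ℝ, (∀ x ∈ s, f x < b) ∧ ∀ y ∈ t, (b : WithTop ℝ) < f y := by
  obtain ⟨x₀, hx₀, hmax⟩ := exists_max_image s f hs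
  obtain ⟨m, hx₀m, hmt⟩ :=
    exists_between ((Finset.lt_inf_iff (lt_top_iff_ne_top.2 (hfin x₀ hx₀))).2 (h x₀ hx₀))
  lift m to ℝ using (hmt.trans_le le_top).ne
  exact ⟨m, fun x hx => (hmax x hx).trans_lt hx₀m, fun y hy => hmt.trans_le (inf_le hy)⟩

lemma nsmul_coe_ne_top (k : ℕ) (b : ℝ) : k • (b : WithTop ℝ) ≠ ⊤ := by
  rw [← WithTop.coe_nsmul]
  exact WithTop.coe_ne_top

section TropEsymm

variable {n i : ℕ} {a : ℕ → WithTop ℝ}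

noncomputable def tropEsymm (n : ℕ) (a : ℕ → WithTop ℝ) (i : ℕ) : WithTop ℝ :=
  ((range n).powersetCard i).inf fun S => ∑ e ∈ S, a e

lemma tropEsymm_zero : tropEsymm n a 0 = 0 := by
  simp [tropEsymm]

lemma exists_sum_eq_tropEsymm (hin : i ≤ n) :
    ∃ S ∈ (range n).powersetCard i, ∑ e ∈ S, a e = tropEsymm n a i := by
  obtain ⟨S, hS, h⟩ := exists_mem_eq_inf ((range n).powersetCard i)
    (powersetCard_nonempty.2 (by rwa [card_range])) fun S => ∑ e ∈ S, a e
  exact ⟨S, hS, h.symm⟩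

lemma tropEsymm_le_sum {S : Finset ℕ} (hS : S ∈ (range n).powersetCard i) :
    tropEsymm n a i ≤ ∑ e ∈ S, a e :=
  inf_le hS

lemma insert_erase_mem_powersetCard {S : Finset ℕ} (hS : S ∈ (range n).powersetCard i)
    {e₀ e : ℕ} (he₀ : e₀ ∈ S) (he : e ∈ range n \ S) :
    insert e (S.erase e₀) ∈ (range n).powersetCard i := by
  obtain ⟨hSn, rfl⟩ := mem_powersetCard.1 hS
  obtain ⟨hen, heS⟩ := mem_sdiff.1 he
  refine mem_powersetCard.2 ⟨insert_subset hen ((erase_subset _ _).trans hSn), ?_⟩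
  rw [card_insert_of_notMem fun h => heS (mem_of_mem_erase h), card_erase_add_one he₀]

lemma le_of_sum_eq_tropEsymm {S : Finset ℕ} (hS : S ∈ (range n).powersetCard i)
    (hSmin : ∑ e ∈ S, a e = tropEsymm n a i) (htop : tropEsymm n a i ≠ ⊤)
    {e₀ e : ℕ} (he₀ : e₀ ∈ S) (he : e ∈ range n \ S) : a e₀ ≤ a e := by
  by_contra hlt
  have hrest : ∑ x ∈ S.erase e₀, a x ≠ ⊤ := fun h => htop (by
    rw [← hSmin, ← add_sum_erase S a he₀, h, add_top])
  have hswap : ∑ x ∈ insert e (S.erase e₀), a x < ∑ x ∈ S, a x := by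
    rw [sum_insert fun h => (mem_sdiff.1 he).2 (mem_of_mem_erase h), ← add_sum_erase S a he₀]
    exact WithTop.add_lt_add_right hrest (not_le.1 hlt)
  exact (tropEsymm_le_sum (insert_erase_mem_powersetCard hS he₀ he)).not_gt (hSmin ▸ hswap)

lemma lt_of_sum_eq_tropEsymm {S : Finset ℕ} (hS : S ∈ (range n).powersetCard i)
    (hSmin : ∑ e ∈ S, a e = tropEsymm n a i)
    (hunique : #{T ∈ (range n).powersetCard i | ∑ e ∈ T, a e = tropEsymm n a i} ≤ 1)
    {e₀ e : ℕ} (he₀ : e₀ ∈ S) (he : e ∈ range n \ S) : a e₀ < a e := by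
  by_contra hle
  have hT := insert_erase_mem_powersetCard hS he₀ he
  have hswap : ∑ x ∈ insert e (S.erase e₀), a x ≤ ∑ x ∈ S, a x := by
    rw [sum_insert fun h => (mem_sdiff.1 he).2 (mem_of_mem_erase h), ← add_sum_erase S a he₀]
    exact add_le_add (not_lt.1 hle) le_rfl
  have hTmin := le_antisymm (hSmin ▸ hswap) (tropEsymm_le_sum hT)
  have hTS := card_le_one.1 hunique _ (mem_filter.2 ⟨hT, hTmin⟩) S
    (mem_filter.2 ⟨hS, hSmin⟩)
  exact (mem_sdiff.1 he).2 (hTS ▸ mem_insert_self e _)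

lemma sum_ite_mem_range {S : Finset ℕ} (hS : S ⊆ range n) (y : WithTop ℝ) :
    ∑ e ∈ range n, (if e ∈ S then a e else y) = ∑ e ∈ S, a e + (n - #S) • y := by
  rw [sum_ite, filter_mem_eq_inter, inter_eq_right.2 hS, filter_not, filter_mem_eq_inter,
    inter_eq_right.2 hS, sum_const, card_sdiff_of_subset hS, card_range]

lemma sum_min_le_sum_add {S : Finset ℕ} (hS : S ∈ (range n).powersetCard i) (b : ℝ) :
    ∑ e ∈ range n, min (b : WithTop ℝ) (a e) ≤
      ∑ e ∈ S, a e + (n - i) • (b : WithTop ℝ) := by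
  obtain ⟨hSn, rfl⟩ := mem_powersetCard.1 hS
  rw [← sum_ite_mem_range hSn]
  exact sum_le_sum fun e _ => by split_ifs <;> simp

lemma sum_add_le_sum_min_iff {S : Finset ℕ} (hS : S ∈ (range n).powersetCard i) (b : ℝ) :
    ∑ e ∈ S, a e + (n - i) • (b : WithTop ℝ) ≤
        ∑ e ∈ range n, min (b : WithTop ℝ) (a e) ↔
      ∀ e ∈ range n, (a e < b → e ∈ S) ∧ (e ∈ S → a e ≤ b) := by
  obtain ⟨hSn, rfl⟩ := mem_powersetCard.1 hS
  rw [← sum_ite_mem_range hSn, sum_ite_le_sum_min_iff]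

lemma sum_min_le_tropEsymm_add (hin : i ≤ n) (b : ℝ) :
    ∑ e ∈ range n, min (b : WithTop ℝ) (a e) ≤
      tropEsymm n a i + (n - i) • (b : WithTop ℝ) := by
  obtain ⟨S, hS, hSmin⟩ := exists_sum_eq_tropEsymm (a := a) hin
  exact hSmin ▸ sum_min_le_sum_add hS b

lemma filter_lt_mem_powersetCard (b : ℝ) :
    {e ∈ range n | a e < b} ∈ (range n).powersetCard #{e ∈ range n | a e < b} :=
  mem_powersetCard.2 ⟨filter_subset _ _, rfl⟩

lemma sum_min_eq_sum_filter_lt (b : ℝ) :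
    ∑ e ∈ range n, min (b : WithTop ℝ) (a e) =
      ∑ e ∈ {e ∈ range n | a e < b}, a e +
        (n - #{e ∈ range n | a e < b}) • (b : WithTop ℝ) := by
  refine le_antisymm (sum_min_le_sum_add (filter_lt_mem_powersetCard b) b)
    ((sum_add_le_sum_min_iff (filter_lt_mem_powersetCard b) b).2 fun e he => ⟨?_, ?_⟩)
  · exact fun h => mem_filter.2 ⟨he, h⟩
  · exact fun h => (mem_filter.1 h).2.le

lemma eq_filter_lt_of_sum_le (b : ℝ) {T : Finset ℕ}
    (hT : T ∈ (range n).powersetCard #{e ∈ range n | a e < b})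
    (hle : ∑ e ∈ T, a e ≤ ∑ e ∈ {e ∈ range n | a e < b}, a e) :
    T = {e ∈ range n | a e < b} := by
  have htangent := (sum_add_le_sum_min_iff hT b).1 <|
    (add_le_add hle le_rfl).trans (sum_min_eq_sum_filter_lt b).ge
  refine (eq_of_subset_of_card_le (t := T) (fun e he => ?_) (mem_powersetCard.1 hT).2.le).symm
  obtain ⟨hen, hlt⟩ := mem_filter.1 he
  exact (htangent e hen).1 hlt

lemma exists_sum_min_eq_tropEsymm_add (hi : 1 ≤ i) (hin : i ≤ n)
    (htop : tropEsymm n a i ≠ ⊤) :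
    ∃ b : ℝ, ∑ e ∈ range n, min (b : WithTop ℝ) (a e) =
      tropEsymm n a i + (n - i) • (b : WithTop ℝ) := by
  obtain ⟨S, hS, hSmin⟩ := exists_sum_eq_tropEsymm (a := a) hin
  have hSne : S.Nonempty := card_pos.1 (by rw [(mem_powersetCard.1 hS).2]; omega)
  obtain ⟨e₀, he₀, hmax⟩ := exists_max_image S a hSne
  obtain ⟨β, hβ⟩ := WithTop.ne_top_iff_exists.1 <|
    WithTop.sum_ne_top.1 (hSmin ▸ htop) e₀ he₀
  refine ⟨β, hSmin ▸ le_antisymm (sum_min_le_sum_add hS β)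
    ((sum_add_le_sum_min_iff hS β).2 fun e he =>
      ⟨fun hlt => ?_, fun heS => hβ ▸ hmax e heS⟩)⟩
  by_contra heS
  have := le_of_sum_eq_tropEsymm hS hSmin htop he₀ (mem_sdiff.2 ⟨he, heS⟩)
  exact this.not_gt (hβ ▸ hlt)

lemma exists_lt_sum_min_of_tropEsymm_eq_top (hin : i ≤ n) (htop : tropEsymm n a i = ⊤)
    (d : ℝ) :
    ∃ b : ℝ, (d : WithTop ℝ) + (n - i) • (b : WithTop ℝ) <
      ∑ e ∈ range n, min (b : WithTop ℝ) (a e) := by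
  set T := {e ∈ range n | a e ≠ ⊤}
  have hT : #T < i := by
    by_contra! hiT
    obtain ⟨X, hXT, hX⟩ := exists_subset_card_eq hiT
    have hXn : X ∈ (range n).powersetCard i :=
      mem_powersetCard.2 ⟨fun e he => (mem_filter.1 (hXT he)).1, hX⟩
    refine (WithTop.sum_ne_top.2 fun e he => (mem_filter.1 (hXT he)).2) (top_le_iff.1 ?_)
    exact htop ▸ tropEsymm_le_sum hXn
  obtain ⟨w, hw⟩ : ∃ w : ℝ, ↑w = ∑ e ∈ T, a e :=
    WithTop.ne_top_iff_exists.1 <| WithTop.sum_ne_top.2 fun e he => (mem_filter.1 he).2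
  -- Fewer than `i` of the `a e` are finite, so for large `b` the slope `n - #T` of
  -- `∑ e, min b (a e)` exceeds `n - i`.
  have hlarge : ∀ᶠ b : ℝ in Filter.atTop, ∀ e ∈ T, a e < b := by
    refine (Filter.eventually_all_finset T).2 fun e he => ?_
    obtain ⟨r, hr⟩ := WithTop.ne_top_iff_exists.1 (mem_filter.1 he).2
    exact (Filter.eventually_gt_atTop r).mono fun b hb => hr ▸ WithTop.coe_lt_coe.2 hb
  obtain ⟨b, hbT, hb0, hbw⟩ :=
    (hlarge.and ((Filter.eventually_gt_atTop 0).and (Filter.eventually_gt_atTop (d - w)))).exists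
  have hfilter : {e ∈ range n | a e < b} = T :=
    filter_congr fun e he => ⟨ne_top_of_lt, fun h => hbT e (mem_filter.2 ⟨he, h⟩)⟩
  refine ⟨b, ?_⟩
  rw [sum_min_eq_sum_filter_lt, hfilter, ← hw, ← WithTop.coe_nsmul, ← WithTop.coe_nsmul,
    ← WithTop.coe_add, ← WithTop.coe_add, WithTop.coe_lt_coe, nsmul_eq_mul, nsmul_eq_mul,
    Nat.cast_sub hin, Nat.cast_sub (hT.le.trans hin)]
  have : (#T : ℝ) + 1 ≤ i := by exact_mod_cast hT
  nlinarith

lemma tropEsymm_le_of_forall_sum_min_le {y : WithTop ℝ} (hi : 1 ≤ i) (hin : i ≤ n)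
    (h : ∀ b : ℝ,
      ∑ e ∈ range n, min (b : WithTop ℝ) (a e) ≤ y + (n - i) • (b : WithTop ℝ)) :
    tropEsymm n a i ≤ y := by
  rcases eq_or_ne (tropEsymm n a i) ⊤ with htop | htop
  · induction y with
    | top => exact le_top
    | coe d =>
      obtain ⟨b, hb⟩ := exists_lt_sum_min_of_tropEsymm_eq_top hin htop d
      exact absurd (h b) hb.not_ge
  · obtain ⟨b, hb⟩ := exists_sum_min_eq_tropEsymm_add hi hin htop
    exact WithTop.le_of_add_le_add_right (nsmul_coe_ne_top (n - i) b) (hb ▸ h b)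

variable {c : ℕ → WithTop ℝ}

lemma tropEsymm_sub_le_of_monic (hmonic : c n = 0)
    (hlow : ∀ i, 1 ≤ i → i ≤ n → tropEsymm n a i ≤ c (n - i)) {j : ℕ}
    (hjn : j ≤ n) :
    tropEsymm n a (n - j) ≤ c j := by
  rcases hjn.eq_or_lt with rfl | hjn
  · rw [Nat.sub_self, tropEsymm_zero, hmonic]
  · simpa [Nat.sub_sub_self hjn.le] using hlow (n - j) (by omega) (Nat.sub_le n j)

lemma sum_min_le_inf_iff (hmonic : c n = 0) :
    (∀ b : ℝ, ∑ e ∈ range n, min (b : WithTop ℝ) (a e) ≤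
        (range (n + 1)).inf fun j => c j + j • (b : WithTop ℝ)) ↔
      ∀ i, 1 ≤ i → i ≤ n → tropEsymm n a i ≤ c (n - i) := by
  refine ⟨fun h i hi hin => tropEsymm_le_of_forall_sum_min_le hi hin fun b => ?_,
    fun hlow b => Finset.le_inf fun j hj => ?_⟩
  · exact (h b).trans <|
      inf_le (f := fun j => c j + j • (b : WithTop ℝ)) (mem_range.2 (by omega))
  · have hjn : j ≤ n := Nat.lt_succ_iff.1 (mem_range.1 hj)
    calc ∑ e ∈ range n, min (b : WithTop ℝ) (a e)
        ≤ tropEsymm n a (n - j) + (n - (n - j)) • (b : WithTop ℝ) :=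
          sum_min_le_tropEsymm_add (Nat.sub_le n j) b
      _ ≤ c j + j • (b : WithTop ℝ) := by
          rw [Nat.sub_sub_self hjn]
          exact add_le_add (tropEsymm_sub_le_of_monic hmonic hlow hjn) le_rfl

lemma inf_le_sum_min (hmonic : c n = 0)
    (hc : ∀ i, 1 ≤ i → i ≤ n → c (n - i) = tropEsymm n a i ∨
      1 < #{S ∈ (range n).powersetCard i | ∑ e ∈ S, a e = tropEsymm n a i}) (b : ℝ) :
    (range (n + 1)).inf (fun j => c j + j • (b : WithTop ℝ)) ≤
      ∑ e ∈ range n, min (b : WithTop ℝ) (a e) := by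
  set S₀ := {e ∈ range n | a e < b}
  have hk : #S₀ ≤ n := (card_filter_le _ _).trans_eq (card_range n)
  have hS₀ : ∀ S ∈ (range n).powersetCard #S₀,
      ∑ e ∈ S, a e = tropEsymm n a #S₀ → S = S₀ :=
    fun S hS hSmin => eq_filter_lt_of_sum_le b hS <|
      hSmin.trans_le (tropEsymm_le_sum (filter_lt_mem_powersetCard b))
  obtain ⟨T, hT, hTmin⟩ := exists_sum_eq_tropEsymm (a := a) hk
  have hTS₀ : T = S₀ := hS₀ T hT hTmin
  have hunique :
      #{S ∈ (range n).powersetCard #S₀ | ∑ e ∈ S, a e = tropEsymm n a #S₀} ≤ 1 :=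
    card_le_one.2 fun S₁ h₁ S₂ h₂ =>
      (hS₀ S₁ (mem_filter.1 h₁).1 (mem_filter.1 h₁).2).trans
        (hS₀ S₂ (mem_filter.1 h₂).1 (mem_filter.1 h₂).2).symm
  have hcoeff : c (n - #S₀) = tropEsymm n a #S₀ := by
    rcases Nat.eq_zero_or_pos #S₀ with h0 | hpos
    · rw [h0, Nat.sub_zero, hmonic, tropEsymm_zero]
    · exact (hc _ hpos hk).resolve_right hunique.not_gt
  calc (range (n + 1)).inf (fun j => c j + j • (b : WithTop ℝ))
      ≤ c (n - #S₀) + (n - #S₀) • (b : WithTop ℝ) := inf_le (mem_range.2 (by omega))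
    _ = ∑ e ∈ range n, min (b : WithTop ℝ) (a e) := by
      rw [hcoeff, ← hTmin, hTS₀, sum_min_eq_sum_filter_lt]

lemma coeff_eq_tropEsymm_of_card_le_one (hmonic : c n = 0)
    (hlow : ∀ i, 1 ≤ i → i ≤ n → tropEsymm n a i ≤ c (n - i))
    (hFG : ∀ b : ℝ, (range (n + 1)).inf (fun j => c j + j • (b : WithTop ℝ)) ≤
      ∑ e ∈ range n, min (b : WithTop ℝ) (a e))
    (hi : 1 ≤ i) (hin : i ≤ n)
    (hunique : #{S ∈ (range n).powersetCard i | ∑ e ∈ S, a e = tropEsymm n a i} ≤ 1) :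
    c (n - i) = tropEsymm n a i := by
  refine le_antisymm ?_ (hlow i hi hin)
  rcases eq_or_ne (tropEsymm n a i) ⊤ with htop | htop
  · exact htop ▸ le_top
  obtain ⟨S, hS, hSmin⟩ := exists_sum_eq_tropEsymm (a := a) hin
  obtain ⟨hSn, hSi⟩ := mem_powersetCard.1 hS
  obtain ⟨b, hbS, hbS'⟩ := exists_coe_between (card_pos.1 (by omega))
    (WithTop.sum_ne_top.1 (hSmin ▸ htop))
    fun e₀ he₀ e he => lt_of_sum_eq_tropEsymm hS hSmin hunique he₀ he
  -- Only `S` realises the minimum at `b`, so `F b` is attained only at the coefficient `c (n - i)`.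
  have htangent : ∀ k, ∀ T ∈ (range n).powersetCard k,
      ∑ e ∈ T, a e + (n - k) • (b : WithTop ℝ) ≤
        ∑ e ∈ range n, min (b : WithTop ℝ) (a e) → k = i := by
    intro k T hT hle
    have h := (sum_add_le_sum_min_iff hT b).1 hle
    obtain ⟨hTn, rfl⟩ := mem_powersetCard.1 hT
    suffices T = S by rw [this, hSi]
    ext e
    refine ⟨fun heT => ?_, fun heS => (h e (hSn heS)).1 (hbS e heS)⟩
    by_contra heS
    exact ((h e (hTn heT)).2 heT).not_gt (hbS' e (mem_sdiff.2 ⟨hTn heT, heS⟩))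
  obtain ⟨j, hj, hFj⟩ := exists_mem_eq_inf (range (n + 1)) nonempty_range_add_one
    fun j => c j + j • (b : WithTop ℝ)
  have hjn : j ≤ n := Nat.lt_succ_iff.1 (mem_range.1 hj)
  obtain ⟨T, hT, hTmin⟩ := exists_sum_eq_tropEsymm (a := a) (Nat.sub_le n j)
  have hji : n - j = i := htangent _ T hT <| by
    rw [hTmin, Nat.sub_sub_self hjn]
    exact (add_le_add (tropEsymm_sub_le_of_monic hmonic hlow hjn) le_rfl).trans (hFj ▸ hFG b)
  obtain rfl : j = n - i := by omega
  refine WithTop.le_of_add_le_add_right (nsmul_coe_ne_top (n - i) b) ?_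
  exact (hFj ▸ hFG b).trans (sum_min_le_tropEsymm_add hin b)

lemma tFactors_iff :
    TFactors n c a ↔ ∀ i, 1 ≤ i → i ≤ n →
      tropEsymm n a i ≤ c (n - i) ∧
        (c (n - i) = tropEsymm n a i ∨
          1 < #{S ∈ (range n).powersetCard i | ∑ e ∈ S, a e = tropEsymm n a i}) := by
  simp only [TFactors, mem_thsum_map_toList]
  rfl

end TropEsymm

/-- A monic polynomial `p = Σ_{i=0}^n c_i T^i` over the tropical hyperfield satisfies
`p ∈ ∏_{e=0}^{n-1} (T + a_e)` if and only if the associated tropical polynomial functions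
agree: for all `b ∈ ℝ`, `min_{0 ≤ i ≤ n} (c_i + i·b) = Σ_{e=0}^{n-1} min(b, a_e)`. -/
theorem tropical_factors_iff_function_eq (n : ℕ) (c : ℕ → WithTop ℝ) (hmonic : c n = 0)
    (a : ℕ → WithTop ℝ) :
    TFactors n c a ↔ ∀ b : ℝ,
      (Finset.range (n + 1)).inf (fun i => c i + (((i : ℝ) * b : ℝ) : WithTop ℝ)) =
        ∑ e ∈ Finset.range n, min (b : WithTop ℝ) (a e) := by
  simp only [← nsmul_eq_mul, WithTop.coe_nsmul]
  rw [tFactors_iff]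
  refine ⟨fun h b => le_antisymm ?_ ?_, fun h i hi hin => ?_⟩
  · exact inf_le_sum_min hmonic (fun i hi hin => (h i hi hin).2) b
  · exact (sum_min_le_inf_iff hmonic).2 (fun i hi hin => (h i hi hin).1) b
  · have hlow := (sum_min_le_inf_iff hmonic).1 fun b => (h b).ge
    refine ⟨hlow i hi hin, or_iff_not_imp_right.2 fun hmany => ?_⟩
    exact coeff_eq_tropEsymm_of_card_le_one hmonic hlow (fun b => (h b).le) hi hin
      (not_lt.1 hmany)
end

section
/- Fundamental theorem of tropical algebra: For every function f : ℝ → ℝ of the form f(b) = min_{0≤i≤n}(c̄_i + i·b) with c̄_n = 0 (extended reals c̄_i, not all ∞ needed beyond c̄_n), there is a sequence ā_1,…,ā_n ∈ ℝ ∪ {∞}, unique up to permutation, such that f(b) = Σ_{i=1}^n min(b, ā_i) for all b ∈ ℝ. -/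
/-!
Existence is by induction on `n`: splitting off the constant term writes the polynomial as
`min(c̄₀, b + g(b))` with `g` monic of degree `n - 1`, factored by induction. The function
`b ↦ b + g(b)` is continuous, increasing and unbounded in both directions, so it takes the
value `c̄₀` at some `t`, and then `min(c̄₀, b + g(b)) = min(b, t) + Σ min(b, min(āᵢ, t))`.
For uniqueness, sort both root sequences; the smallest root is the largest `b` with
`f(b) = n·b`, and cancelling its factor reduces the degree.
-/

namespace TropicalFTA

open Finset Filter

def polyFun (c : ℕ → WithTop ℝ) (n : ℕ) (b : ℝ) : WithTop ℝ :=
  (range (n + 1)).inf fun i => c i + (((i : ℝ) * b : ℝ) : WithTop ℝ)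

/-- The tropical product of the linear factors `b ⊕ a e`. -/
def factoredFun {n : ℕ} (a : Fin n → WithTop ℝ) (b : ℝ) : WithTop ℝ :=
  ∑ e, min (b : WithTop ℝ) (a e)

theorem polyFun_succ (c : ℕ → WithTop ℝ) (n : ℕ) (b : ℝ) :
    polyFun c (n + 1) b = min (c 0) (b + polyFun (fun i => c (i + 1)) n b) := by
  have hshift (i : ℕ) :
      c (i + 1) + ((((i + 1 : ℕ) : ℝ) * b : ℝ) : WithTop ℝ) =
        b + (c (i + 1) + (((i : ℝ) * b : ℝ) : WithTop ℝ)) := by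
    rw [add_left_comm, ← WithTop.coe_add]
    congr 2
    push_cast
    ring
  rw [polyFun, range_add_one', inf_insert, inf_map, polyFun,
    apply_inf_eq_inf_comp (fun x => (b : WithTop ℝ) + x) (fun _ _ => (min_add_add_left ..).symm)
      (WithTop.add_top _)]
  congr 1
  · simp
  · exact inf_congr rfl fun i _ => hshift i

section factoredFun

variable {n : ℕ}

theorem factoredFun_succ (a : Fin (n + 1) → WithTop ℝ) (b : ℝ) :
    factoredFun a b = min (b : WithTop ℝ) (a 0) + factoredFun (fun e => a e.succ) b :=
  Fin.sum_univ_succ _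

theorem factoredFun_comp_perm (a : Fin n → WithTop ℝ) (σ : Equiv.Perm (Fin n)) :
    factoredFun (a ∘ σ) = factoredFun a :=
  funext fun b => Equiv.sum_comp σ fun e => min (b : WithTop ℝ) (a e)

theorem monotone_factoredFun (a : Fin n → WithTop ℝ) : Monotone (factoredFun a) :=
  fun _ _ h => sum_le_sum fun _ _ => min_le_min_right _ (WithTop.coe_le_coe.2 h)

theorem monotone_add_factoredFun (a : Fin n → WithTop ℝ) :
    Monotone fun b : ℝ => (b : WithTop ℝ) + factoredFun a b :=
  fun _ _ h => add_le_add (WithTop.coe_le_coe.2 h) (monotone_factoredFun a h)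

theorem coe_min_untopD (b : ℝ) (x : WithTop ℝ) :
    ((min b (x.untopD b) : ℝ) : WithTop ℝ) = min (b : WithTop ℝ) x := by
  cases x <;> simp

theorem continuous_min_untopD (x : WithTop ℝ) : Continuous fun b : ℝ => min b (x.untopD b) := by
  cases x <;> simp <;> fun_prop

theorem coe_sum_min_untopD (a : Fin n → WithTop ℝ) (b : ℝ) :
    ((∑ e, min b ((a e).untopD b) : ℝ) : WithTop ℝ) = factoredFun a b := by
  simp only [WithTop.coe_sum, coe_min_untopD, factoredFun]

theorem exists_add_factoredFun_eq (a : Fin n → WithTop ℝ) (γ : ℝ) :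
    ∃ t : ℝ, (t : WithTop ℝ) + factoredFun a t = γ := by
  set ψ : ℝ → ℝ := fun b => ∑ e, min b ((a e).untopD b)
  have hψ_mono : Monotone ψ := fun x y h => WithTop.coe_le_coe.1 <| by
    simpa only [ψ, coe_sum_min_untopD] using monotone_factoredFun a h
  have hψ_cont : Continuous ψ := continuous_finsetSum _ fun e _ => continuous_min_untopD (a e)
  have h_top : Tendsto (fun b => ψ b + b) atTop atTop :=
    tendsto_atTop_add_left_of_le' _ (ψ 0) ((eventually_ge_atTop 0).mono fun _ => (hψ_mono ·))
      tendsto_id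
  have h_bot : Tendsto (fun b => ψ b + b) atBot atBot :=
    tendsto_atBot_add_left_of_ge' _ (ψ 0) ((eventually_le_atBot 0).mono fun _ => (hψ_mono ·))
      tendsto_id
  obtain ⟨t, ht⟩ := (hψ_cont.add continuous_id).surjective h_top h_bot γ
  exact ⟨t, by rw [← coe_sum_min_untopD, ← WithTop.coe_add, add_comm, ← ht]; rfl⟩

/-- Both sides equal `g (min t b)` for the increasing `g b = b + factoredFun a b`. -/
theorem min_add_factoredFun_eq (a : Fin n → WithTop ℝ) (t b : ℝ) :
    min ((t : WithTop ℝ) + factoredFun a t) (b + factoredFun a b) =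
      factoredFun (Fin.cons (t : WithTop ℝ) fun e => min (a e) t) b := by
  rw [← (monotone_add_factoredFun a).map_min, factoredFun_succ]
  simp only [Fin.cons_zero, Fin.cons_succ, factoredFun, WithTop.coe_min]
  congr 1
  · exact min_comm _ _
  · exact sum_congr rfl fun e _ => by rw [min_left_comm, min_comm (a e), min_comm (t : WithTop ℝ)]

theorem factoredFun_eq_nsmul_iff (a : Fin n → WithTop ℝ) (b : ℝ) :
    factoredFun a b = n • (b : WithTop ℝ) ↔ ∀ e, (b : WithTop ℝ) ≤ a e := by
  have hsum : n • (b : WithTop ℝ) = ((∑ _e : Fin n, b : ℝ) : WithTop ℝ) := by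
    simp only [sum_const, card_univ, Fintype.card_fin, WithTop.coe_nsmul]
  rw [← coe_sum_min_untopD, hsum, WithTop.coe_inj,
    sum_eq_sum_iff_of_le fun e _ => min_le_left b ((a e).untopD b)]
  refine forall_congr' fun e => ?_
  rw [← min_eq_left_iff, ← coe_min_untopD, WithTop.coe_inj]
  simp

theorem eq_of_monotone_of_factoredFun_eq {a a' : Fin n → WithTop ℝ} (ha : Monotone a)
    (ha' : Monotone a') (h : factoredFun a = factoredFun a') : a = a' := by
  induction n with
  | zero => exact funext fun e => e.elim0
  | succ m ih =>
    have h_bounds_iff {x : Fin (m + 1) → WithTop ℝ} (hx : Monotone x) (b : ℝ) :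
        (b : WithTop ℝ) ≤ x 0 ↔ factoredFun x b = (m + 1) • (b : WithTop ℝ) := by
      rw [factoredFun_eq_nsmul_iff]
      exact ⟨fun hb e => hb.trans (hx (Fin.zero_le e)), fun hb => hb 0⟩
    have h0 : a 0 = a' 0 := WithTop.eq_of_forall_coe_le_iff fun b => by
      rw [h_bounds_iff ha, h_bounds_iff ha', h]
    have h_tail : factoredFun (fun e => a e.succ) = factoredFun (fun e => a' e.succ) :=
      funext fun b => WithTop.add_left_cancel (ne_top_of_le_ne_top WithTop.coe_ne_top
        (min_le_left (b : WithTop ℝ) (a 0))) <| by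
          rw [← factoredFun_succ, h0, ← factoredFun_succ, h]
    have h_succ := ih (ha.comp Fin.strictMono_succ.monotone)
      (ha'.comp Fin.strictMono_succ.monotone) h_tail
    exact funext <| Fin.cases h0 (congrFun h_succ)

theorem exists_perm_of_factoredFun_eq {a a' : Fin n → WithTop ℝ}
    (h : factoredFun a = factoredFun a') : ∃ σ : Equiv.Perm (Fin n), ∀ i, a' i = a (σ i) := by
  have h_sorted := eq_of_monotone_of_factoredFun_eq (Tuple.monotone_sort a)
    (Tuple.monotone_sort a') (by rw [factoredFun_comp_perm, factoredFun_comp_perm, h])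
  refine ⟨(Tuple.sort a').symm.trans (Tuple.sort a), fun i => ?_⟩
  simpa using (congrFun h_sorted ((Tuple.sort a').symm i)).symm

end factoredFun

theorem exists_polyFun_eq_factoredFun (n : ℕ) (c : ℕ → WithTop ℝ) (hc : c n = 0) :
    ∃ a : Fin n → WithTop ℝ, polyFun c n = factoredFun a := by
  induction n generalizing c with
  | zero => exact ⟨Fin.elim0, funext fun b => by simp [polyFun, factoredFun, hc]⟩
  | succ m ih =>
    obtain ⟨a, ha⟩ := ih (fun i => c (i + 1)) hc
    cases hc0 : c 0 with
    | top =>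
      refine ⟨Fin.cons ⊤ a, funext fun b => ?_⟩
      simp [polyFun_succ, hc0, ha, factoredFun_succ]
    | coe γ =>
      obtain ⟨t, ht⟩ := exists_add_factoredFun_eq a γ
      refine ⟨Fin.cons (t : WithTop ℝ) fun e => min (a e) t, funext fun b => ?_⟩
      rw [polyFun_succ, hc0, ha, ← ht, min_add_factoredFun_eq]

end TropicalFTA

/-- Fundamental theorem of tropical algebra: every tropical polynomial function
`b ↦ min_{0 ≤ i ≤ n} (c̄_i + i·b)` with `c̄_i ∈ ℝ ∪ {∞}` and `c̄_n = 0` (monic) agrees on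
`ℝ` with `b ↦ Σ_{e=0}^{n-1} min(b, ā_e)` for a sequence `ā_0, …, ā_{n-1} ∈ ℝ ∪ {∞}`
which is unique up to permutation. -/
theorem fundamental_theorem_of_tropical_algebra (n : ℕ) (c : ℕ → WithTop ℝ)
    (hmonic : c n = 0) :
    ∃ a : Fin n → WithTop ℝ,
      (∀ b : ℝ,
        (Finset.range (n + 1)).inf (fun i => c i + (((i : ℝ) * b : ℝ) : WithTop ℝ)) =
          ∑ e : Fin n, min (b : WithTop ℝ) (a e)) ∧
      ∀ a' : Fin n → WithTop ℝ,
        (∀ b : ℝ,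
          (Finset.range (n + 1)).inf (fun i => c i + (((i : ℝ) * b : ℝ) : WithTop ℝ)) =
            ∑ e : Fin n, min (b : WithTop ℝ) (a' e)) →
        ∃ σ : Equiv.Perm (Fin n), ∀ i : Fin n, a' i = a (σ i) := by
  obtain ⟨a, ha⟩ := TropicalFTA.exists_polyFun_eq_factoredFun n c hmonic
  refine ⟨a, congrFun ha, fun a' ha' => ?_⟩
  exact TropicalFTA.exists_perm_of_factoredFun_eq (ha.symm.trans (funext ha'))
end
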